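/- arXiv:2502.10661 — 5 statements merged into one kernel-verified Lean document; each statement's English description precedes it below -/
import Mathlib

section
/- The consecutive patterns 211 and 221 are equidistributed on 𝓕_n for every n ≥ 1: for all n ≥ 1 and all k ≥ 0, the number of π ∈ 𝓕_n with #211(π) = k equals the number of π ∈ 𝓕_n with #221(π) = k. -/
open scoped BigOperators

/-- `w` is a Catalan word: it is nonempty, starts with `1`, and each subsequent
letter lies between `1` and the previous letter plus one. -/
def IsCatalan (w : List ℕ) : Prop :=
  w ≠ [] ∧ w.getD 0 0 = 1 ∧
    ∀ i, i + 1 < w.length →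
      1 ≤ w.getD (i + 1) 0 ∧ w.getD (i + 1) 0 ≤ w.getD i 0 + 1

/-- `i` is the starting index of a maximal weakly increasing run of `w`. -/
def RunStart (w : List ℕ) (i : ℕ) : Prop :=
  i < w.length ∧ (i = 0 ∨ w.getD i 0 < w.getD (i - 1) 0)

/-- `w` is flattened: the first letters of its increasing runs, read left to
right, form a weakly nondecreasing sequence. -/
def IsFlattened (w : List ℕ) : Prop :=
  ∀ i j, RunStart w i → RunStart w j → i ≤ j → w.getD i 0 ≤ w.getD j 0

/-- The set of flattened Catalan words of length `n`. -/
def FlatCat (n : ℕ) : Set (List ℕ) :=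
  {w | w.length = n ∧ IsCatalan w ∧ IsFlattened w}

/-- `i` is the starting index of an occurrence of the consecutive pattern `τ`
in the word `w`, i.e. the factor of `w` of length `|τ|` starting at `i` is
order-isomorphic to `τ`. -/
def OccAt (τ w : List ℕ) (i : ℕ) : Prop :=
  i + τ.length ≤ w.length ∧
    ∀ s < τ.length, ∀ t < τ.length,
      (w.getD (i + s) 0 < w.getD (i + t) 0 ↔ τ.getD s 0 < τ.getD t 0)

/-- The number of occurrences of the consecutive pattern `τ` in `w`. -/
noncomputable def numOcc (τ w : List ℕ) : ℕ :=
  Set.ncard {i | OccAt τ w i}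

/-- The number of distinct letters in the terminal (rightmost) increasing run
of `w`, i.e. in the longest weakly increasing suffix of `w`. -/
noncomputable def trun (w : List ℕ) : ℕ :=
  ((w.drop (sInf {i | List.Chain' (· ≤ ·) (w.drop i)})).toFinset).card

/-- The total number of occurrences of the consecutive pattern `τ` over all
flattened Catalan words of length `n`. -/
noncomputable def tot (n : ℕ) (τ : List ℕ) : ℕ :=
  ∑ᶠ w ∈ FlatCat n, numOcc τ w

/-
A word is determined by its run-length encoding, the list of its plateaus (letter, multiplicity)
with adjacent letters distinct, and being Catalan or flattened depends only on the letters of the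
plateaus, not on their multiplicities. An occurrence of 221 is a plateau of length at least 2
immediately followed by a lower plateau, an occurrence of 211 a plateau of length at least 2
immediately preceded by a higher one. Cut the list of plateaus into maximal strictly descending
runs: in a run with multiplicities k₁, …, kₘ, the pattern 221 counts the kᵢ ≥ 2 with i < m and 211
those with i > 1. Reversing the multiplicities inside every descending run is therefore an
involution of 𝓕_n exchanging #221 and #211.
-/

lemma occAt_succ_cons (τ w : List ℕ) (a i : ℕ) : OccAt τ (a :: w) (i + 1) ↔ OccAt τ w i := by
  simp only [OccAt, List.length_cons, Nat.add_right_comm i 1, List.getD_cons_succ]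
  exact and_congr_left' (by omega)

open Classical in
lemma numOcc_cons (τ w : List ℕ) (a : ℕ) :
    numOcc τ (a :: w) = (if OccAt τ (a :: w) 0 then 1 else 0) + numOcc τ w := by
  have hfin : {i | OccAt τ w i}.Finite :=
    (Set.finite_le_nat w.length).subset fun i (hi : OccAt τ w i) ↦ show i ≤ w.length by
      have := hi.1; omega
  have hsplit : {i | OccAt τ (a :: w) i} =
      {i | i = 0 ∧ OccAt τ (a :: w) 0} ∪ Nat.succ '' {i | OccAt τ w i} := by
    ext (_ | i) <;> simp [occAt_succ_cons]
  unfold numOcc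
  rw [hsplit, Set.ncard_union_eq _ ((Set.finite_singleton 0).subset fun i hi ↦ hi.1)
    (hfin.image _), Set.ncard_image_of_injective _ Nat.succ_injective]
  · split_ifs with h <;> simp [h]
  · rw [Set.disjoint_left]; rintro _ ⟨rfl, -⟩ ⟨_, -, h⟩; exact Nat.succ_ne_zero _ h

lemma numOcc_of_length_lt (τ w : List ℕ) (h : w.length < τ.length) : numOcc τ w = 0 := by
  rw [numOcc, Set.eq_empty_of_forall_notMem (s := {i | OccAt τ w i}) fun i hi ↦ by
    have := hi.1; omega, Set.ncard_empty]

def countTriples (P : ℕ → ℕ → ℕ → Prop) [∀ a b c, Decidable (P a b c)] : List ℕ → ℕ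
  | a :: b :: c :: t => (if P a b c then 1 else 0) + countTriples P (b :: c :: t)
  | _ => 0

lemma numOcc_eq_countTriples (τ : List ℕ) (hτ : τ.length = 3) (P : ℕ → ℕ → ℕ → Prop)
    [∀ a b c, Decidable (P a b c)] (hP : ∀ a b c t, OccAt τ (a :: b :: c :: t) 0 ↔ P a b c) :
    ∀ w, numOcc τ w = countTriples P w
  | a :: b :: c :: t => by
    classical
    rw [numOcc_cons, countTriples, numOcc_eq_countTriples τ hτ P hP (b :: c :: t)]
    simp only [hP]
  | [] | [_] | [_, _] => numOcc_of_length_lt _ _ (by simp [hτ])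

lemma occAt_221_zero_iff (a b c : ℕ) (t : List ℕ) :
    OccAt [2, 2, 1] (a :: b :: c :: t) 0 ↔ a = b ∧ c < b := by
  simp [OccAt, Nat.forall_lt_succ_right, Nat.le_one_iff_eq_zero_or_eq_one, forall_eq_or_imp]
  omega

lemma occAt_211_zero_iff (a b c : ℕ) (t : List ℕ) :
    OccAt [2, 1, 1] (a :: b :: c :: t) 0 ↔ b = c ∧ b < a := by
  simp [OccAt, Nat.forall_lt_succ_right, Nat.le_one_iff_eq_zero_or_eq_one, forall_eq_or_imp]
  omega

section countTriples
variable {P : ℕ → ℕ → ℕ → Prop} [∀ a b c, Decidable (P a b c)]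

lemma countTriples_replicate {x : ℕ} (h : ¬ P x x x) : ∀ k, countTriples P (List.replicate k x) = 0
  | 0 | 1 | 2 => rfl
  | k + 3 => by
    rw [List.replicate_succ, List.replicate_succ, List.replicate_succ, countTriples, if_neg h,
      ← List.replicate_succ, ← List.replicate_succ, countTriples_replicate h (k + 2)]

lemma countTriples_cons_cons_of_forall_not {x y : ℕ} (h : ∀ c, ¬ P x y c) (l : List ℕ) :
    countTriples P (x :: y :: l) = countTriples P (y :: l) := by
  rcases l with _ | ⟨c, t⟩
  · rfl
  · rw [countTriples, if_neg (h c), zero_add]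

lemma countTriples_replicate_append {x : ℕ} (h : ∀ c, ¬ P x x c) (l : List ℕ) :
    ∀ k, countTriples P (List.replicate (k + 1) x ++ l) = countTriples P (x :: l)
  | 0 => rfl
  | k + 1 => by
    rw [← countTriples_replicate_append h l k, List.replicate_succ, List.cons_append,
      List.replicate_succ, List.cons_append, countTriples_cons_cons_of_forall_not h]

end countTriples

lemma countTriples_221_replicate_append {x y : ℕ} (hxy : x ≠ y) (l : List ℕ) :
    ∀ k, countTriples (fun a b c ↦ a = b ∧ c < b) (List.replicate (k + 1) x ++ y :: l) =
      (if 0 < k ∧ y < x then 1 else 0) + countTriples (fun a b c ↦ a = b ∧ c < b) (y :: l)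
  | 0 => by simpa using countTriples_cons_cons_of_forall_not (fun _ h ↦ hxy h.1) l
  | 1 => by
    rw [show List.replicate 2 x ++ y :: l = x :: x :: y :: l from rfl, countTriples,
      countTriples_cons_cons_of_forall_not (fun _ h ↦ hxy h.1) l]
    simp
  | k + 2 => by
    have h := countTriples_221_replicate_append hxy l (k + 1)
    simp only [List.replicate_succ, List.cons_append] at h ⊢
    rw [countTriples, if_neg (by simp), zero_add, h]
    simp

lemma countTriples_211_cons_cons (x y : ℕ) (l : List ℕ) :
    countTriples (fun a b c ↦ b = c ∧ b < a) (x :: y :: l) =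
      (if l.head? = some y ∧ y < x then 1 else 0) +
        countTriples (fun a b c ↦ b = c ∧ b < a) (y :: l) := by
  rcases l with _ | ⟨c, t⟩
  · rfl
  · simp [countTriples, eq_comm]

section countAdj
variable {α : Type*} (R : α → α → Prop) [DecidableRel R]

def countAdj : List α → ℕ
  | a :: b :: t => (if R a b then 1 else 0) + countAdj (b :: t)
  | _ => 0

lemma countAdj_append {l m : List α} (h : ∀ x ∈ l.getLast?, ∀ y ∈ m.head?, ¬ R x y) :
    countAdj R (l ++ m) = countAdj R l + countAdj R m := by
  induction l with
  | nil => simp [countAdj]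
  | cons a l ih =>
    rcases l with _ | ⟨b, l⟩
    · rcases m with _ | ⟨c, m⟩
      · simp [countAdj]
      · simp_all [countAdj]
    · simp only [List.cons_append, countAdj] at ih ⊢
      rw [ih (by simpa using h)]
      omega

lemma countAdj_flatten {gs : List (List α)} (hne : [] ∉ gs)
    (hb : gs.IsChain fun a b ↦ ∃ ha hb, ¬ R (a.getLast ha) (b.head hb)) :
    countAdj R gs.flatten = (gs.map (countAdj R)).sum := by
  induction gs with
  | nil => rfl
  | cons g gs ih =>
    rcases gs with _ | ⟨g', gs⟩
    · simp
    obtain ⟨b, t, rfl⟩ := List.exists_cons_of_ne_nil (l := g') fun h0 ↦ hne (by simp [h0])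
    obtain ⟨hg, -, hgb⟩ := (List.isChain_cons_cons.mp hb).1
    rw [List.flatten_cons, List.map_cons, List.sum_cons, ← ih (by simp_all) hb.tail,
      countAdj_append]
    intro x hx y hy
    rw [← List.getLast_of_mem_getLast? hx]
    simp_all

lemma countAdj_eq_sum_splitBy (r : α → α → Bool) (hR : ∀ x y, R x y → r x y) (l : List α) :
    countAdj R l = ((l.splitBy r).map (countAdj R)).sum := by
  conv_lhs => rw [← List.flatten_splitBy r l]
  refine countAdj_flatten R (List.nil_notMem_splitBy r l) <|
    (List.isChain_getLast_head_splitBy r l).imp fun c d ⟨hc, hd, hcd⟩ ↦ ⟨hc, hd, fun h ↦ ?_⟩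
  simp [hR _ _ h] at hcd

variable {R} (P : α → Prop) [DecidablePred P]

lemma countAdj_and_left_of_isChain {c : List α} (hc : c.IsChain R) :
    countAdj (fun x y ↦ P x ∧ R x y) c = c.dropLast.countP (P ·) := by
  induction c with
  | nil => rfl
  | cons a c ih =>
    rcases c with _ | ⟨b, c⟩
    · rfl
    · rw [countAdj, ih hc.tail, List.dropLast_cons_cons, List.countP_cons]
      simp [(List.isChain_cons_cons.mp hc).1, add_comm]

lemma countAdj_and_right_of_isChain {c : List α} (hc : c.IsChain R) :
    countAdj (fun x y ↦ P y ∧ R x y) c = c.tail.countP (P ·) := by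
  induction c with
  | nil => rfl
  | cons a c ih =>
    rcases c with _ | ⟨b, c⟩
    · rfl
    · rw [countAdj, ih hc.tail, List.tail_cons, List.tail_cons, List.countP_cons]
      simp [(List.isChain_cons_cons.mp hc).1, add_comm]

end countAdj

def expand (L : List (ℕ × ℕ)) : List ℕ :=
  L.flatMap fun p ↦ List.replicate p.2 p.1

def runLength (w : List ℕ) : List (ℕ × ℕ) :=
  (w.splitBy (· == ·)).map fun g ↦ (g.headD 0, g.length)

def IsRunLength (L : List (ℕ × ℕ)) : Prop :=
  (∀ p ∈ L, 0 < p.2) ∧ L.IsChain fun p q ↦ p.1 ≠ q.1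

lemma length_expand (L : List (ℕ × ℕ)) : (expand L).length = (L.map Prod.snd).sum := by
  simp [expand, List.length_flatMap]

lemma replicate_eq_of_mem_splitBy_beq {w g : List ℕ} (hg : g ∈ w.splitBy (· == ·)) :
    List.replicate g.length (g.headD 0) = g := by
  obtain ⟨a, l, rfl⟩ := List.exists_cons_of_ne_nil (List.ne_nil_of_mem_splitBy hg)
  have hchain : (a :: l).IsChain (· = ·) := by simpa using List.isChain_of_mem_splitBy hg
  rw [List.isChain_cons_eq_iff_eq_replicate] at hchain
  rw [List.headD_cons, List.length_cons, List.replicate_succ, ← hchain]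

lemma expand_runLength (w : List ℕ) : expand (runLength w) = w := by
  rw [expand, runLength, List.flatMap_map, List.flatMap_def]
  conv_rhs => rw [← List.flatten_splitBy (· == ·) w]
  exact congrArg List.flatten <| (List.map_congr_left fun g hg ↦
    replicate_eq_of_mem_splitBy_beq hg).trans (List.map_id' _)

lemma runLength_expand {L : List (ℕ × ℕ)} (hL : IsRunLength L) : runLength (expand L) = L := by
  have hsplit : (expand L).splitBy (· == ·) = L.map fun p ↦ List.replicate p.2 p.1 := by
    refine List.splitBy_flatten ?_ ?_ ?_
    · simp only [List.mem_map, List.replicate_eq_nil_iff, not_exists, not_and]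
      exact fun p hp h0 ↦ (hL.1 p hp).ne' h0
    · simp only [List.mem_map]
      rintro _ ⟨p, -, rfl⟩
      exact List.isChain_replicate_of_rel _ (beq_self_eq_true p.1)
    · refine List.isChain_map _ |>.mpr (hL.2.imp_of_mem_imp fun p q hp hq hpq ↦ ?_)
      refine ⟨by simpa using (hL.1 p hp).ne', by simpa using (hL.1 q hq).ne', ?_⟩
      simpa using hpq
  rw [runLength, hsplit, List.map_map]
  refine (List.map_congr_left fun p hp ↦ ?_).trans (List.map_id' L)
  obtain ⟨k, hk⟩ := Nat.exists_eq_add_one_of_ne_zero (hL.1 p hp).ne'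
  exact Prod.ext (by simp [hk, List.replicate_succ]) (by simp)

lemma getLast_eq_headD_of_mem_splitBy_beq {w g : List ℕ} (hg : g ∈ w.splitBy (· == ·))
    (hne : g ≠ []) : g.getLast hne = g.headD 0 := by
  conv_lhs => arg 1; rw [← replicate_eq_of_mem_splitBy_beq hg]
  exact List.getLast_replicate _

lemma isRunLength_runLength (w : List ℕ) : IsRunLength (runLength w) := by
  refine ⟨?_, ?_⟩
  · simp only [runLength, List.mem_map]
    rintro _ ⟨g, hg, rfl⟩
    exact List.length_pos_iff.mpr (List.ne_nil_of_mem_splitBy hg)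
  · refine List.isChain_map _ |>.mpr <| (List.isChain_getLast_head_splitBy _ w).imp_of_mem_imp
      fun g h hg hh ⟨hgne, hhne, hbeq⟩ ↦ ?_
    obtain ⟨b, l, rfl⟩ := List.exists_cons_of_ne_nil hhne
    rw [getLast_eq_headD_of_mem_splitBy_beq hg] at hbeq
    simpa using hbeq

lemma IsRunLength.tail {p : ℕ × ℕ} {L : List (ℕ × ℕ)} (h : IsRunLength (p :: L)) :
    IsRunLength L :=
  ⟨fun q hq ↦ h.1 q (List.mem_cons_of_mem p hq), h.2.tail⟩

lemma expand_cons (x k : ℕ) (T : List (ℕ × ℕ)) :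
    expand ((x, k) :: T) = List.replicate k x ++ expand T := rfl

lemma head?_expand {L : List (ℕ × ℕ)} (h : ∀ p ∈ L, 0 < p.2) :
    (expand L).head? = L.head?.map Prod.fst := by
  rcases L with _ | ⟨⟨x, k⟩, T⟩
  · rfl
  · obtain ⟨k, rfl⟩ := Nat.exists_eq_add_one_of_ne_zero (h _ List.mem_cons_self).ne'
    rfl

lemma countTriples_221_expand : ∀ L : List (ℕ × ℕ), IsRunLength L →
    countTriples (fun a b c ↦ a = b ∧ c < b) (expand L) =
      countAdj (fun p q ↦ 2 ≤ p.2 ∧ q.1 < p.1) L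
  | [], _ => rfl
  | [(x, k)], _ => by
    rw [expand_cons, expand, List.flatMap_nil, List.append_nil]
    exact countTriples_replicate (P := fun a b c ↦ a = b ∧ c < b) (by simp) k
  | (x, k) :: (y, m) :: T, hL => by
    obtain ⟨k, rfl⟩ := Nat.exists_eq_add_one_of_ne_zero (hL.1 _ List.mem_cons_self).ne'
    obtain ⟨m, rfl⟩ := Nat.exists_eq_add_one_of_ne_zero (hL.1 (y, m) (by simp)).ne'
    have hxy : x ≠ y := (List.isChain_cons_cons.mp hL.2).1
    have hexp : expand ((y, m + 1) :: T) = y :: expand ((y, m) :: T) := rfl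
    rw [expand_cons x, hexp, countTriples_221_replicate_append hxy, ← hexp,
      countTriples_221_expand _ hL.tail, countAdj]
    simp [Nat.pos_iff_ne_zero, Nat.one_le_iff_ne_zero]

lemma countTriples_211_expand : ∀ L : List (ℕ × ℕ), IsRunLength L →
    countTriples (fun a b c ↦ b = c ∧ b < a) (expand L) =
      countAdj (fun p q ↦ 2 ≤ q.2 ∧ q.1 < p.1) L
  | [], _ => rfl
  | [(x, k)], _ => by
    rw [expand_cons, expand, List.flatMap_nil, List.append_nil]
    exact countTriples_replicate (P := fun a b c ↦ b = c ∧ b < a) (by simp) k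
  | (x, k) :: (y, m) :: T, hL => by
    obtain ⟨k, rfl⟩ := Nat.exists_eq_add_one_of_ne_zero (hL.1 _ List.mem_cons_self).ne'
    obtain ⟨m, rfl⟩ := Nat.exists_eq_add_one_of_ne_zero (hL.1 (y, m) (by simp)).ne'
    have hexp : expand ((y, m + 1) :: T) = y :: expand ((y, m) :: T) := rfl
    have hhead : (expand ((y, m) :: T)).head? = some y ↔ 0 < m := by
      rcases m with _ | m
      · rw [expand_cons, List.replicate_zero, List.nil_append, head?_expand hL.tail.tail.1]
        have hne := (List.isChain_cons_cons.mp hL.2).2.rel_head?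
        simp only [Option.map_eq_some_iff, lt_irrefl, iff_false, not_exists, not_and]
        exact fun q hq hqy ↦ hne hq hqy.symm
      · simp [expand_cons, List.replicate_succ]
    rw [expand_cons x, hexp, countTriples_replicate_append (by simp), countTriples_211_cons_cons,
      ← hexp, countTriples_211_expand _ hL.tail, countAdj]
    simp [hhead, Nat.pos_iff_ne_zero, Nat.one_le_iff_ne_zero]

lemma numOcc_221_expand {L : List (ℕ × ℕ)} (hL : IsRunLength L) :
    numOcc [2, 2, 1] (expand L) = countAdj (fun p q ↦ 2 ≤ p.2 ∧ q.1 < p.1) L := by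
  rw [numOcc_eq_countTriples _ rfl _ occAt_221_zero_iff, countTriples_221_expand L hL]

lemma numOcc_211_expand {L : List (ℕ × ℕ)} (hL : IsRunLength L) :
    numOcc [2, 1, 1] (expand L) = countAdj (fun p q ↦ 2 ≤ q.2 ∧ q.1 < p.1) L := by
  rw [numOcc_eq_countTriples _ rfl _ occAt_211_zero_iff, countTriples_211_expand L hL]

def descent (p q : ℕ × ℕ) : Bool := q.1 < p.1

def revMult (c : List (ℕ × ℕ)) : List (ℕ × ℕ) :=
  (c.map Prod.fst).zip (c.map Prod.snd).reverse

def descentReverse (L : List (ℕ × ℕ)) : List (ℕ × ℕ) :=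
  ((L.splitBy descent).map revMult).flatten

lemma map_fst_revMult (c : List (ℕ × ℕ)) : (revMult c).map Prod.fst = c.map Prod.fst :=
  List.map_fst_zip (by simp)

lemma map_snd_revMult (c : List (ℕ × ℕ)) :
    (revMult c).map Prod.snd = (c.map Prod.snd).reverse :=
  List.map_snd_zip (by simp)

lemma revMult_revMult (c : List (ℕ × ℕ)) : revMult (revMult c) = c := by
  rw [revMult, map_fst_revMult, map_snd_revMult, List.reverse_reverse]
  exact (List.zip_of_prod rfl rfl).symm

lemma revMult_ne_nil {c : List (ℕ × ℕ)} (h : c ≠ []) : revMult c ≠ [] := by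
  rw [← List.length_pos_iff] at h ⊢
  simpa [revMult] using h

lemma isChain_descent_congr {c d : List (ℕ × ℕ)} (h : c.map Prod.fst = d.map Prod.fst) :
    c.IsChain (descent · ·) ↔ d.IsChain (descent · ·) := by
  have key : ∀ e : List (ℕ × ℕ), e.IsChain (descent · ·) ↔ (e.map Prod.fst).IsChain (· > ·) := by
    intro e; simp [List.isChain_map, descent]
  rw [key, key, h]

lemma fst_getLast_congr {c d : List (ℕ × ℕ)} (h : c.map Prod.fst = d.map Prod.fst) (hc : c ≠ [])
    (hd : d ≠ []) : (c.getLast hc).1 = (d.getLast hd).1 := by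
  rw [← List.getLast_map (f := Prod.fst) (by simpa), ← List.getLast_map (f := Prod.fst) (by simpa)]
  simp only [h]

lemma fst_head_congr {c d : List (ℕ × ℕ)} (h : c.map Prod.fst = d.map Prod.fst) (hc : c ≠ [])
    (hd : d ≠ []) : (c.head hc).1 = (d.head hd).1 := by
  rw [← List.head_map (f := Prod.fst) (by simpa), ← List.head_map (f := Prod.fst) (by simpa)]
  simp only [h]

lemma map_fst_descentReverse (L : List (ℕ × ℕ)) :
    (descentReverse L).map Prod.fst = L.map Prod.fst := by
  conv_rhs => rw [← List.flatten_splitBy descent L]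
  simp only [descentReverse, List.map_flatten, List.map_map]
  congr 1
  exact List.map_congr_left fun c _ ↦ map_fst_revMult c

lemma perm_map_snd_descentReverse (L : List (ℕ × ℕ)) :
    ((descentReverse L).map Prod.snd).Perm (L.map Prod.snd) := by
  conv_rhs => rw [← List.flatten_splitBy descent L]
  simp only [descentReverse, List.map_flatten, List.map_map]
  refine List.Perm.flatten_congr <| List.forall₂_map_left_iff.mpr <|
    List.forall₂_map_right_iff.mpr <| List.forall₂_same.mpr fun c _ ↦ ?_
  rw [Function.comp_apply, map_snd_revMult]
  exact List.reverse_perm _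

lemma splitBy_descentReverse (L : List (ℕ × ℕ)) :
    (descentReverse L).splitBy descent = (L.splitBy descent).map revMult := by
  rw [List.splitBy_eq_iff]
  refine ⟨rfl, ?_, ?_, ?_⟩
  · simp only [List.mem_map, not_exists, not_and]
    exact fun c hc h0 ↦ revMult_ne_nil (List.ne_nil_of_mem_splitBy hc) h0
  · simp only [List.mem_map]
    rintro _ ⟨c, hc, rfl⟩
    exact (isChain_descent_congr (map_fst_revMult c)).mpr (List.isChain_of_mem_splitBy hc)
  · refine List.isChain_map _ |>.mpr <| (List.isChain_getLast_head_splitBy _ L).imp_of_mem_imp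
      fun c d hc hd ⟨hcne, hdne, hcd⟩ ↦ ⟨revMult_ne_nil hcne, revMult_ne_nil hdne, ?_⟩
    simpa [descent, fst_getLast_congr (map_fst_revMult c) _ hcne,
      fst_head_congr (map_fst_revMult d) _ hdne] using hcd

lemma descentReverse_involutive : Function.Involutive descentReverse := by
  intro L
  rw [descentReverse, splitBy_descentReverse, List.map_map]
  conv_rhs => rw [← List.flatten_splitBy descent L]
  exact congrArg List.flatten <| (List.map_congr_left fun c _ ↦ revMult_revMult c).trans
    (List.map_id' _)

lemma countAdj_revMult {c : List (ℕ × ℕ)} (hc : c.IsChain (descent · ·)) :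
    countAdj (fun p q ↦ 2 ≤ p.2 ∧ q.1 < p.1) (revMult c) =
      countAdj (fun p q ↦ 2 ≤ q.2 ∧ q.1 < p.1) c := by
  have hc₁ : c.IsChain fun p q ↦ q.1 < p.1 := by simpa [descent] using hc
  have hc₂ : (revMult c).IsChain fun p q ↦ q.1 < p.1 := by
    simpa [descent] using (isChain_descent_congr (map_fst_revMult c)).mpr hc
  rw [countAdj_and_left_of_isChain (fun p : ℕ × ℕ ↦ 2 ≤ p.2) hc₂,
    countAdj_and_right_of_isChain (fun p : ℕ × ℕ ↦ 2 ≤ p.2) hc₁]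
  have := congrArg (List.countP (fun k : ℕ ↦ 2 ≤ k)) (congrArg List.dropLast (map_snd_revMult c))
  simp only [← List.map_dropLast, List.dropLast_reverse, List.countP_reverse, ← List.map_tail,
    List.countP_map] at this
  exact this

lemma countAdj_descentReverse (L : List (ℕ × ℕ)) :
    countAdj (fun p q ↦ 2 ≤ p.2 ∧ q.1 < p.1) (descentReverse L) =
      countAdj (fun p q ↦ 2 ≤ q.2 ∧ q.1 < p.1) L := by
  rw [countAdj_eq_sum_splitBy _ descent (fun p q h ↦ by simp [descent, h.2]),
    countAdj_eq_sum_splitBy _ descent (fun p q h ↦ by simp [descent, h.2]),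
    splitBy_descentReverse, List.map_map]
  exact congrArg List.sum <| List.map_congr_left fun c hc ↦
    countAdj_revMult (List.isChain_of_mem_splitBy hc)

def StutterInvariant (Q : List ℕ → Prop) : Prop :=
  ∀ x y a, Q (x ++ a :: a :: y) ↔ Q (x ++ a :: y)

lemma StutterInvariant.replicate {Q : List ℕ → Prop} (hQ : StutterInvariant Q) (x y : List ℕ)
    (a : ℕ) : ∀ k, Q (x ++ List.replicate (k + 1) a ++ y) ↔ Q (x ++ a :: y)
  | 0 => by simp
  | k + 1 => by
    have h : x ++ List.replicate (k + 2) a ++ y = x ++ a :: a :: (List.replicate k a ++ y) := by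
      simp [List.replicate_succ]
    rw [h, hQ, ← hQ.replicate x y a k]
    simp [List.replicate_succ]

lemma StutterInvariant.expand_iff {Q : List ℕ → Prop} (hQ : StutterInvariant Q)
    {L : List (ℕ × ℕ)} (hL : ∀ p ∈ L, 0 < p.2) : Q (expand L) ↔ Q (L.map Prod.fst) := by
  suffices ∀ x, Q (x ++ expand L) ↔ Q (x ++ L.map Prod.fst) by simpa using this []
  induction L with
  | nil => simp [expand]
  | cons p T ih =>
    intro x
    obtain ⟨a, k⟩ := p
    obtain ⟨k, rfl⟩ := Nat.exists_eq_add_one_of_ne_zero (hL _ List.mem_cons_self).ne'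
    rw [expand_cons, ← List.append_assoc, hQ.replicate]
    simpa using ih (fun q hq ↦ hL q (List.mem_cons_of_mem _ hq)) (x ++ [a])

lemma isCatalan_iff (w : List ℕ) :
    IsCatalan w ↔ w.head? = some 1 ∧ (∀ a ∈ w, 1 ≤ a) ∧ w.IsChain fun a b ↦ b ≤ a + 1 := by
  rcases w with _ | ⟨a, w⟩
  · simp [IsCatalan]
  simp only [IsCatalan, List.isChain_iff_getElem, List.forall_mem_iff_getElem, ne_eq,
    reduceCtorEq, not_false_eq_true, true_and, List.head?_cons, Option.some.injEq]
  constructor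
  · rintro ⟨h0, h⟩
    refine ⟨h0, fun i hi ↦ ?_, fun i hi ↦ ?_⟩
    · rcases i with _ | i
      · simp_all
      · have := (h i hi).1
        rwa [List.getD_eq_getElem _ _ hi] at this
    · have := (h i hi).2
      rwa [List.getD_eq_getElem _ _ hi, List.getD_eq_getElem _ _ (Nat.lt_of_succ_lt hi)] at this
  · rintro ⟨h0, hpos, hchain⟩
    refine ⟨h0, fun i hi ↦ ?_⟩
    rw [List.getD_eq_getElem _ _ hi, List.getD_eq_getElem _ _ (Nat.lt_of_succ_lt hi)]
    exact ⟨hpos _ hi, hchain i hi⟩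

lemma stutterInvariant_isCatalan : StutterInvariant IsCatalan := by
  intro x y a
  have hhead : (x ++ a :: a :: y).head? = (x ++ a :: y).head? := by cases x <;> rfl
  have hmem : ∀ b, b ∈ x ++ a :: a :: y ↔ b ∈ x ++ a :: y := by simp
  rw [isCatalan_iff, isCatalan_iff, hhead, List.isChain_split, List.isChain_cons_cons,
    List.isChain_split (l₂ := y)]
  simp only [hmem, le_add_iff_nonneg_right, zero_le, true_and]

lemma getD_stutter (x y : List ℕ) (a i : ℕ) :
    (x ++ a :: a :: y).getD i 0 = (x ++ a :: y).getD (if i ≤ x.length then i else i - 1) 0 := by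
  have h₁ : x ++ a :: a :: y = (x ++ [a]) ++ a :: y := by simp
  have h₂ : x ++ a :: y = (x ++ [a]) ++ y := by simp
  split_ifs with hi
  · rw [h₁, h₂, List.getD_append (x ++ [a]) _ _ _ (by simp; omega),
      List.getD_append (x ++ [a]) _ _ _ (by simp; omega)]
  · obtain ⟨j, rfl⟩ := Nat.exists_eq_add_of_lt (Nat.lt_of_not_le hi)
    rw [h₁, List.getD_append_right (x ++ [a]) _ _ _ (by simp),
      List.getD_append_right x _ _ _ (by omega)]
    simp only [List.length_append, List.length_singleton]
    congr 1
    omega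

lemma runStart_stutter_iff (x y : List ℕ) (a i : ℕ) :
    RunStart (x ++ a :: a :: y) i ↔
      i ≠ x.length + 1 ∧ RunStart (x ++ a :: y) (if i ≤ x.length then i else i - 1) := by
  simp only [RunStart, getD_stutter, List.length_append, List.length_cons]
  split_ifs with h₁ h₂ h₂
  · exact ⟨fun h ↦ ⟨by omega, by omega, h.2⟩, fun h ↦ ⟨by omega, h.2.2⟩⟩
  · omega
  · obtain rfl : i = x.length + 1 := by omega
    simp
  · exact ⟨fun h ↦ ⟨by omega, by omega, .inr (h.2.resolve_left (by omega))⟩,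
      fun h ↦ ⟨by omega, .inr (h.2.2.resolve_left (by omega))⟩⟩

lemma getD_stutter_shift (x y : List ℕ) (a k : ℕ) :
    (x ++ a :: a :: y).getD (if k ≤ x.length then k else k + 1) 0 = (x ++ a :: y).getD k 0 := by
  by_cases hk : k ≤ x.length
  · rw [getD_stutter, if_pos hk, if_pos hk]
  · rw [getD_stutter, if_neg hk, if_neg (by omega), Nat.add_sub_cancel]

lemma runStart_stutter_shift {x y : List ℕ} {a k : ℕ} (h : RunStart (x ++ a :: y) k) :
    RunStart (x ++ a :: a :: y) (if k ≤ x.length then k else k + 1) := by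
  refine (runStart_stutter_iff x y a _).mpr ⟨by split_ifs <;> omega, ?_⟩
  by_cases hk : k ≤ x.length
  · simpa [hk] using h
  · simpa [hk, show ¬ k + 1 ≤ x.length by omega] using h

lemma stutterInvariant_isFlattened : StutterInvariant IsFlattened := by
  intro x y a
  constructor
  · intro H i j hi hj hij
    rw [← getD_stutter_shift x y a i, ← getD_stutter_shift x y a j]
    exact H _ _ (runStart_stutter_shift hi) (runStart_stutter_shift hj) (by split_ifs <;> omega)
  · intro H i j hi hj hij
    rw [getD_stutter, getD_stutter]
    exact H _ _ ((runStart_stutter_iff x y a i).mp hi).2 ((runStart_stutter_iff x y a j).mp hj).2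
      (by split_ifs <;> omega)

lemma IsRunLength.descentReverse {L : List (ℕ × ℕ)} (hL : IsRunLength L) :
    IsRunLength (descentReverse L) := by
  refine ⟨fun p hp ↦ ?_, ?_⟩
  · obtain ⟨q, hq, hpq⟩ := List.mem_map.mp <|
      (perm_map_snd_descentReverse L).subset (List.mem_map_of_mem (f := Prod.snd) hp)
    exact hpq ▸ hL.1 q hq
  · have h := (List.isChain_map (R := (· ≠ ·)) Prod.fst).mpr hL.2
    rw [← map_fst_descentReverse] at h
    exact (List.isChain_map Prod.fst).mp h

def descentReverseWord (w : List ℕ) : List ℕ :=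
  expand (descentReverse (runLength w))

lemma descentReverseWord_involutive : Function.Involutive descentReverseWord := by
  intro w
  rw [descentReverseWord, descentReverseWord,
    runLength_expand (isRunLength_runLength w).descentReverse, descentReverse_involutive,
    expand_runLength]

lemma length_descentReverseWord (w : List ℕ) : (descentReverseWord w).length = w.length := by
  conv_rhs => rw [← expand_runLength w]
  rw [descentReverseWord, length_expand, length_expand, (perm_map_snd_descentReverse _).sum_eq]

lemma StutterInvariant.descentReverseWord_iff {Q : List ℕ → Prop} (hQ : StutterInvariant Q)
    (w : List ℕ) : Q (descentReverseWord w) ↔ Q w := by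
  conv_rhs => rw [← expand_runLength w]
  rw [descentReverseWord, hQ.expand_iff (isRunLength_runLength w).descentReverse.1,
    map_fst_descentReverse, hQ.expand_iff (isRunLength_runLength w).1]

lemma descentReverseWord_mem_flatCat_iff (n : ℕ) (w : List ℕ) :
    descentReverseWord w ∈ FlatCat n ↔ w ∈ FlatCat n := by
  simp only [FlatCat, Set.mem_ofPred_eq, length_descentReverseWord,
    stutterInvariant_isCatalan.descentReverseWord_iff,
    stutterInvariant_isFlattened.descentReverseWord_iff]

lemma numOcc_221_descentReverseWord (w : List ℕ) :
    numOcc [2, 2, 1] (descentReverseWord w) = numOcc [2, 1, 1] w := by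
  rw [descentReverseWord, numOcc_221_expand (isRunLength_runLength w).descentReverse,
    countAdj_descentReverse, ← numOcc_211_expand (isRunLength_runLength w), expand_runLength]

theorem equidist_211_221_general (n : ℕ) (k : ℕ) :
    {w ∈ FlatCat n | numOcc [2, 1, 1] w = k}.ncard
      = {w ∈ FlatCat n | numOcc [2, 2, 1] w = k}.ncard := by
  have hpre : {w ∈ FlatCat n | numOcc [2, 1, 1] w = k} =
      descentReverseWord ⁻¹' {w ∈ FlatCat n | numOcc [2, 2, 1] w = k} := by
    ext w
    simp only [Set.mem_preimage, Set.mem_sep_iff, descentReverseWord_mem_flatCat_iff,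
      numOcc_221_descentReverseWord]
  rw [hpre, ← descentReverseWord_involutive.image_eq_preimage_symm,
    Set.ncard_image_of_injective _ descentReverseWord_involutive.injective]

/-- The consecutive patterns `211` and `221` are equidistributed on flattened
Catalan words of length `n` for every `n ≥ 1`. -/
theorem equidist_211_221 (n : ℕ) (hn : 1 ≤ n) (k : ℕ) :
    {w ∈ FlatCat n | numOcc [2, 1, 1] w = k}.ncard
      = {w ∈ FlatCat n | numOcc [2, 2, 1] w = k}.ncard :=
  equidist_211_221_general n k
end

section
/- For every integer n ≥ 2, tot_n(121) = ((n+1)·3^(n−3) + n − 3)/4; equivalently, 4·tot_n(121) = (n+1)·3^(n−3) + n − 3 (for n = 2 this is interpreted as 4·tot_2(121) = 3·3^(−1) + (−1) = 0, i.e., tot_2(121) = 0). -/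
open scoped BigOperators

/-!
Appending a letter `x` to a flattened Catalan word `w` of length `n ≥ 1` gives one of length
`n + 1` exactly when `h ≤ x ≤ ℓ + 1`, where `ℓ` is the last letter of `w` and `h` the first
letter of its last run, and every word of length `n + 1` arises from exactly one such pair.
Under this extension the span `d = ℓ - h` becomes `0` for `x < ℓ` and `d`, `d + 1` for
`x = ℓ, ℓ + 1`, while a new factor `121` appears only when `w` ends in an ascent and `x` is its
penultimate letter. Summing over extensions gives linear recurrences for the number of words,
the total span, the number `A_n` of words ending in an ascent, the total number `T_n` of
occurrences of `121` and its span-weighted version `S_n`; in particular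
`T_{n+1} = 2 T_n + S_n + A_n` and `S_{n+1} = 2 S_n + T_n`, which are solved by induction.
-/

open Finset

section Concat

variable {w : List ℕ} {x : ℕ}

theorem getD_concat_length (w : List ℕ) (x d : ℕ) : (w ++ [x]).getD w.length d = x := by
  simp

theorem getLastD_eq_getD (w : List ℕ) (d : ℕ) : w.getLastD d = w.getD (w.length - 1) d := by
  simp [List.getLastD_eq_getLast?, List.getLast?_eq_getElem?, List.getD_eq_getElem?_getD]

theorem getD_concat_length_sub_one (hw : w ≠ []) (d : ℕ) :
    (w ++ [x]).getD (w.length - 1) d = w.getLastD d := by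
  rw [List.getD_append _ _ _ _ (by simpa [Nat.pos_iff_ne_zero] using hw), getLastD_eq_getD]

theorem runStart_concat_iff_of_lt {i : ℕ} (hi : i < w.length) :
    RunStart (w ++ [x]) i ↔ RunStart w i := by
  unfold RunStart
  rw [List.getD_append _ _ _ _ hi, List.getD_append _ _ _ (i - 1) (by omega),
    List.length_append, List.length_singleton]
  omega

theorem runStart_concat_length_iff (hw : w ≠ []) :
    RunStart (w ++ [x]) w.length ↔ x < w.getLastD 0 := by
  have : w.length ≠ 0 := by simpa using hw
  unfold RunStart
  rw [getD_concat_length, getD_concat_length_sub_one hw, List.length_append,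
    List.length_singleton]
  omega

end Concat

/-- On the reversal of a word: the letter where its last weakly increasing run begins. -/
def runHeadRev : List ℕ → ℕ
  | [] => 0
  | [a] => a
  | a :: b :: t => if b ≤ a then runHeadRev (b :: t) else a

def lastRunHead (w : List ℕ) : ℕ := runHeadRev w.reverse

section LastRunHead

variable {w : List ℕ}

theorem lastRunHead_concat (hw : w ≠ []) (x : ℕ) :
    lastRunHead (w ++ [x]) = if w.getLastD 0 ≤ x then lastRunHead w else x := by
  obtain ⟨v, y, rfl⟩ := (List.eq_nil_or_concat w).resolve_left hw
  simp only [lastRunHead, List.concat_eq_append, List.reverse_append, List.reverse_cons,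
    List.reverse_nil, List.nil_append, List.singleton_append, List.getLastD_concat]
  rfl

theorem runHeadRev_le_headD (l : List ℕ) : runHeadRev l ≤ l.headD 0 := by
  induction l using runHeadRev.induct with
  | case1 | case2 => rfl
  | case3 a b t h ih => simp only [runHeadRev, if_pos h]; exact ih.trans h
  | case4 a b t h => simp [runHeadRev, if_neg h]

theorem lastRunHead_le_getLastD (w : List ℕ) : lastRunHead w ≤ w.getLastD 0 := by
  simpa [lastRunHead, List.getLastD_eq_getLast?, List.headD_eq_head?_getD]
    using runHeadRev_le_headD w.reverse

theorem exists_runStart_lastRunHead (hw : w ≠ []) :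
    ∃ i, RunStart w i ∧ w.getD i 0 = lastRunHead w ∧ ∀ j, RunStart w j → j ≤ i := by
  induction w using List.reverseRecOn with
  | nil => exact absurd rfl hw
  | append_singleton v y ih =>
    rcases eq_or_ne v [] with rfl | hv
    · exact ⟨0, ⟨by simp, Or.inl rfl⟩, rfl, fun j hj => by simpa using hj.1⟩
    have hlen {j} (hj : RunStart (v ++ [y]) j) : j ≤ v.length := by
      simpa [Nat.lt_succ_iff] using hj.1
    by_cases hy : v.getLastD 0 ≤ y
    · obtain ⟨i, hi, hvi, hmax⟩ := ih hv
      refine ⟨i, (runStart_concat_iff_of_lt hi.1).2 hi, ?_, fun j hj => ?_⟩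
      · rw [List.getD_append _ _ _ _ hi.1, hvi, lastRunHead_concat hv, if_pos hy]
      · rcases (hlen hj).lt_or_eq with hj' | rfl
        · exact hmax j ((runStart_concat_iff_of_lt hj').1 hj)
        · exact absurd ((runStart_concat_length_iff hv).1 hj) (not_lt.2 hy)
    · refine ⟨v.length, (runStart_concat_length_iff hv).2 (not_le.1 hy), ?_, fun _ => hlen⟩
      rw [getD_concat_length, lastRunHead_concat hv, if_neg hy]

theorem IsFlattened.getD_le_lastRunHead (hf : IsFlattened w) {j : ℕ} (hj : RunStart w j) :
    w.getD j 0 ≤ lastRunHead w := by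
  obtain ⟨i, hi, hvi, hmax⟩ := exists_runStart_lastRunHead (List.ne_nil_of_length_pos
    (Nat.zero_lt_of_lt hj.1))
  exact hvi ▸ hf j i hj hi (hmax j hj)

theorem IsCatalan.one_le_getD (hw : IsCatalan w) {i : ℕ} (hi : i < w.length) :
    1 ≤ w.getD i 0 := by
  cases i with
  | zero => exact hw.2.1.ge
  | succ i => exact (hw.2.2 i hi).1

theorem IsCatalan.one_le_lastRunHead (hw : IsCatalan w) : 1 ≤ lastRunHead w := by
  obtain ⟨i, hi, hvi, -⟩ := exists_runStart_lastRunHead hw.1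
  exact hvi ▸ hw.one_le_getD hi.1

end LastRunHead

section FlatCatConcat

variable {w : List ℕ} {x : ℕ}

theorem isCatalan_concat_iff (hw : w ≠ []) :
    IsCatalan (w ++ [x]) ↔ IsCatalan w ∧ 1 ≤ x ∧ x ≤ w.getLastD 0 + 1 := by
  have hpos : 0 < w.length := List.length_pos_iff.2 hw
  have hget {i} (hi : i < w.length) := List.getD_append w [x] 0 i hi
  simp only [IsCatalan, List.length_append, List.length_singleton, hget hpos]
  constructor
  · rintro ⟨-, h0, hstep⟩
    have hlast := hstep (w.length - 1) (by omega)
    rw [Nat.sub_add_cancel hpos, getD_concat_length, getD_concat_length_sub_one hw] at hlast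
    refine ⟨⟨hw, h0, fun i hi => ?_⟩, hlast⟩
    simpa only [hget hi, hget (Nat.lt_of_succ_lt hi)] using hstep i (by omega)
  · rintro ⟨⟨-, h0, hstep⟩, hx⟩
    refine ⟨by simp, h0, fun i hi => ?_⟩
    rcases (Nat.lt_succ_iff.1 hi).lt_or_eq with hi | hi
    · simpa only [hget hi, hget (Nat.lt_of_succ_lt hi)] using hstep i hi
    · rw [hi, getD_concat_length, ← Nat.sub_eq_of_eq_add hi.symm, getD_concat_length_sub_one hw]
      exact hx

theorem isFlattened_concat_iff (hw : w ≠ []) :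
    IsFlattened (w ++ [x]) ↔ IsFlattened w ∧ (x < w.getLastD 0 → lastRunHead w ≤ x) := by
  have hlen {j} (hj : RunStart (w ++ [x]) j) : j ≤ w.length := by
    simpa [Nat.lt_succ_iff] using hj.1
  constructor
  · intro hf
    refine ⟨fun i j hi hj hij => ?_, fun hx => ?_⟩
    · simpa only [List.getD_append _ _ _ _ hi.1, List.getD_append _ _ _ _ hj.1] using
        hf i j ((runStart_concat_iff_of_lt hi.1).2 hi) ((runStart_concat_iff_of_lt hj.1).2 hj) hij
    · obtain ⟨i, hi, hvi, -⟩ := exists_runStart_lastRunHead hw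
      simpa only [List.getD_append _ _ _ _ hi.1, hvi, getD_concat_length] using
        hf i w.length ((runStart_concat_iff_of_lt hi.1).2 hi)
          ((runStart_concat_length_iff hw).2 hx) hi.1.le
  · rintro ⟨hf, hx⟩ i j hi hj hij
    rcases (hlen hj).lt_or_eq with hj' | rfl
    · have hi' := hij.trans_lt hj'
      rw [List.getD_append _ _ _ _ hi', List.getD_append _ _ _ _ hj']
      exact hf i j ((runStart_concat_iff_of_lt hi').1 hi) ((runStart_concat_iff_of_lt hj').1 hj) hij
    · rw [getD_concat_length]
      rcases hij.lt_or_eq with hi' | rfl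
      · rw [List.getD_append _ _ _ _ hi']
        exact (hf.getD_le_lastRunHead ((runStart_concat_iff_of_lt hi').1 hi)).trans
          (hx ((runStart_concat_length_iff hw).1 hj))
      · rw [getD_concat_length]

def admissibleLetters (w : List ℕ) : Finset ℕ := Icc (lastRunHead w) (w.getLastD 0 + 1)

theorem concat_mem_flatCat_iff {n : ℕ} (hw : w ∈ FlatCat n) :
    w ++ [x] ∈ FlatCat (n + 1) ↔ x ∈ admissibleLetters w := by
  obtain ⟨hlen, hcat, hflat⟩ := hw
  simp only [FlatCat, Set.mem_ofPred_eq, List.length_append, List.length_singleton, hlen,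
    isCatalan_concat_iff hcat.1, isFlattened_concat_iff hcat.1, admissibleLetters, mem_Icc,
    true_and, hcat, hflat]
  constructor
  · rintro ⟨⟨-, hx⟩, hrun⟩
    exact ⟨(lt_or_ge x _).elim hrun (lastRunHead_le_getLastD w).trans, hx⟩
  · rintro ⟨hx, hx'⟩
    exact ⟨⟨hcat.one_le_lastRunHead.trans hx, hx'⟩, fun _ => hx⟩

theorem mem_flatCat_succ_iff {n : ℕ} (hn : n ≠ 0) {u : List ℕ} :
    u ∈ FlatCat (n + 1) ↔ ∃ w ∈ FlatCat n, ∃ x ∈ admissibleLetters w, u = w ++ [x] := by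
  refine ⟨fun hu => ?_, ?_⟩
  · obtain ⟨hlen, hcat, hflat⟩ := hu
    obtain ⟨w, x, rfl⟩ := (List.eq_nil_or_concat u).resolve_left hcat.1
    simp only [List.concat_eq_append, List.length_append, List.length_singleton,
      Nat.add_right_cancel_iff] at hlen hcat hflat ⊢
    have hw : w ≠ [] := by rintro rfl; exact hn hlen.symm
    have hmem : w ∈ FlatCat n :=
      ⟨hlen, ((isCatalan_concat_iff hw).1 hcat).1, ((isFlattened_concat_iff hw).1 hflat).1⟩
    exact ⟨w, hmem, x, (concat_mem_flatCat_iff hmem).1 ⟨by simp [hlen], hcat, hflat⟩, rfl⟩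
  · rintro ⟨w, hw, x, hx, rfl⟩
    exact (concat_mem_flatCat_iff hw).2 hx

theorem flatCat_zero : FlatCat 0 = ∅ :=
  Set.eq_empty_of_forall_notMem fun _ hw => hw.2.1.1 (List.eq_nil_of_length_eq_zero hw.1)

theorem flatCat_one : FlatCat 1 = {[1]} := by
  ext w
  constructor
  · rintro ⟨hlen, hcat, -⟩
    obtain ⟨a, rfl⟩ := List.length_eq_one_iff.1 hlen
    simpa [IsCatalan] using hcat
  · rintro rfl
    refine ⟨rfl, ⟨by simp, rfl, by simp⟩, fun i j hi hj _ => ?_⟩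
    simp only [RunStart, List.length_singleton, Nat.lt_one_iff] at hi hj
    rw [hi.1, hj.1]

end FlatCatConcat

def flatCatFinset : ℕ → Finset (List ℕ)
  | 0 => ∅
  | 1 => {[1]}
  | n + 2 => (flatCatFinset (n + 1)).biUnion fun w => (admissibleLetters w).image (w ++ [·])

theorem flatCatFinset_succ {n : ℕ} (hn : n ≠ 0) :
    flatCatFinset (n + 1) =
      (flatCatFinset n).biUnion fun w => (admissibleLetters w).image (w ++ [·]) := by
  obtain ⟨m, rfl⟩ := Nat.exists_eq_succ_of_ne_zero hn
  rfl

theorem coe_flatCatFinset (n : ℕ) : (flatCatFinset n : Set (List ℕ)) = FlatCat n := by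
  induction n with
  | zero => simp [flatCatFinset, flatCat_zero]
  | succ n ih =>
    rcases eq_or_ne n 0 with rfl | hn
    · simp [flatCatFinset, flatCat_one]
    ext u
    simp only [flatCatFinset_succ hn, coe_biUnion, coe_image, Set.mem_iUnion, Set.mem_image,
      mem_coe, ih, mem_flatCat_succ_iff hn, exists_prop, eq_comm (b := u)]

theorem sum_flatCatFinset_succ {M : Type*} [AddCommMonoid M] {n : ℕ} (hn : n ≠ 0)
    (g : List ℕ → M) :
    ∑ u ∈ flatCatFinset (n + 1), g u =
      ∑ w ∈ flatCatFinset n, ∑ x ∈ admissibleLetters w, g (w ++ [x]) := by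
  rw [flatCatFinset_succ hn, sum_biUnion]
  · exact sum_congr rfl fun w _ => sum_image fun x _ y _ h => by simpa using h
  · intro v _ w _ hvw
    simp only [Function.onFun, disjoint_left, mem_image]
    rintro _ ⟨x, -, rfl⟩ ⟨y, -, h⟩
    exact hvw (List.append_inj_left' h rfl).symm

theorem tot_eq_sum_flatCatFinset (n : ℕ) (τ : List ℕ) :
    tot n τ = ∑ w ∈ flatCatFinset n, numOcc τ w := by
  rw [tot, ← coe_flatCatFinset, finsum_mem_coe_finset]

section Occurrences

variable {τ w : List ℕ} {x i : ℕ}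

instance (τ w : List ℕ) : DecidablePred (OccAt τ w) := fun _ => by
  unfold OccAt; infer_instance

theorem numOcc_eq_card (τ w : List ℕ) :
    numOcc τ w = #{i ∈ range (w.length + 1 - τ.length) | OccAt τ w i} := by
  rw [numOcc, ← Set.ncard_coe_finset, coe_filter]
  congr
  ext i
  exact ⟨fun h => ⟨mem_range.2 (by have := h.1; omega), h⟩, And.right⟩

theorem occAt_concat_iff_of_le (h : i + τ.length ≤ w.length) :
    OccAt τ (w ++ [x]) i ↔ OccAt τ w i := by
  unfold OccAt
  refine and_congr (by simp only [List.length_append]; omega) (forall₂_congr fun s hs => ?_)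
  refine forall₂_congr fun t ht => ?_
  rw [List.getD_append _ _ _ _ (by omega), List.getD_append _ _ _ _ (by omega)]

theorem numOcc_concat (τ w : List ℕ) (x : ℕ) :
    numOcc τ (w ++ [x]) =
      numOcc τ w + if OccAt τ (w ++ [x]) (w.length + 1 - τ.length) then 1 else 0 := by
  simp only [numOcc_eq_card, card_filter, List.length_append, List.length_singleton]
  rcases le_or_gt τ.length (w.length + 1) with h | h
  · rw [show w.length + 1 + 1 - τ.length = w.length + 1 - τ.length + 1 by omega, sum_range_succ]
    congr 1
    exact sum_congr rfl fun i hi =>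
      if_congr (occAt_concat_iff_of_le (by rw [mem_range] at hi; omega)) rfl rfl
  · have : ¬OccAt τ (w ++ [x]) 0 := fun hocc => by
      have := hocc.1; simp only [List.length_append, List.length_singleton] at this; omega
    simp [this, show w.length + 1 + 1 - τ.length = 0 by omega,
      show w.length + 1 - τ.length = 0 by omega]

theorem occAt_121_iff {u : List ℕ} {i : ℕ} :
    OccAt [1, 2, 1] u i ↔
      i + 3 ≤ u.length ∧ u.getD i 0 = u.getD (i + 2) 0 ∧ u.getD i 0 < u.getD (i + 1) 0 := by
  unfold OccAt
  simp only [List.length_cons, List.length_nil]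
  refine and_congr_right fun _ => ⟨fun h => ?_, fun ⟨h02, h01⟩ s hs t ht => ?_⟩
  · have h01 := h 0 (by norm_num) 1 (by norm_num)
    have h02 := h 0 (by norm_num) 2 (by norm_num)
    have h20 := h 2 (by norm_num) 0 (by norm_num)
    simp only [Nat.add_zero, List.getD_cons_zero, List.getD_cons_succ] at h01 h02 h20
    omega
  · interval_cases s <;> interval_cases t <;>
      simp only [Nat.add_zero, List.getD_cons_zero, List.getD_cons_succ] <;> omega

end Occurrences

def EndsWithAscent (w : List ℕ) : Prop :=
  2 ≤ w.length ∧ w.getD (w.length - 2) 0 < w.getLastD 0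

instance : DecidablePred EndsWithAscent := fun _ => by unfold EndsWithAscent; infer_instance

def lastRunSpan (w : List ℕ) : ℕ := w.getLastD 0 - lastRunHead w

section Extension

variable {w : List ℕ}

theorem endsWithAscent_concat_iff (hw : w ≠ []) (x : ℕ) :
    EndsWithAscent (w ++ [x]) ↔ w.getLastD 0 < x := by
  have : w.length ≠ 0 := by simpa using hw
  unfold EndsWithAscent
  rw [List.length_append, List.length_singleton, Nat.add_sub_add_right w.length 1 1,
    getD_concat_length_sub_one hw, List.getLastD_concat]
  omega

theorem EndsWithAscent.lastRunHead_le (h : EndsWithAscent w) :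
    lastRunHead w ≤ w.getD (w.length - 2) 0 := by
  obtain ⟨v, y, rfl⟩ :=
    (List.eq_nil_or_concat w).resolve_left (by rintro rfl; exact absurd h.1 (by simp))
  simp only [List.concat_eq_append] at h ⊢
  have hv : v ≠ [] := by rintro rfl; simp [EndsWithAscent] at h
  have hpen : (v ++ [y]).getD ((v ++ [y]).length - 2) 0 = v.getLastD 0 := by
    rw [List.length_append, List.length_singleton, Nat.add_sub_add_right v.length 1 1,
      getD_concat_length_sub_one hv]
  rw [EndsWithAscent, hpen, List.getLastD_concat] at h
  rw [hpen, lastRunHead_concat hv, if_pos h.2.le]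
  exact lastRunHead_le_getLastD v

theorem numOcc_121_concat (hw : w ≠ []) (x : ℕ) :
    numOcc [1, 2, 1] (w ++ [x]) = numOcc [1, 2, 1] w +
      if EndsWithAscent w ∧ x = w.getD (w.length - 2) 0 then 1 else 0 := by
  rw [numOcc_concat, List.length_cons, List.length_cons, List.length_singleton,
    Nat.add_sub_add_right w.length 1 2]
  refine congrArg _ (if_congr ?_ rfl rfl)
  rw [occAt_121_iff, EndsWithAscent, List.length_append, List.length_singleton]
  by_cases h2 : 2 ≤ w.length
  · rw [List.getD_append _ _ _ _ (by omega), show w.length - 2 + 1 = w.length - 1 by omega,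
      getD_concat_length_sub_one hw, show w.length - 2 + 2 = w.length by omega,
      getD_concat_length]
    constructor
    · rintro ⟨-, hx, hlt⟩
      exact ⟨⟨h2, hlt⟩, hx.symm⟩
    · rintro ⟨⟨-, hlt⟩, rfl⟩
      exact ⟨by omega, rfl, hlt⟩
  · exact iff_of_false (fun h => by omega) (fun h => h2 h.1.1)

theorem lastRunSpan_concat (hw : w ≠ []) (x : ℕ) :
    lastRunSpan (w ++ [x]) = if w.getLastD 0 ≤ x then x - lastRunHead w else 0 := by
  rw [lastRunSpan, List.getLastD_concat, lastRunHead_concat hw]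
  split_ifs <;> simp

theorem card_admissibleLetters (w : List ℕ) : #(admissibleLetters w) = lastRunSpan w + 2 := by
  have := lastRunHead_le_getLastD w
  rw [admissibleLetters, Nat.card_Icc, lastRunSpan]
  omega

theorem sum_admissibleLetters {M : Type*} [AddCommMonoid M] (w : List ℕ) (f : ℕ → M) :
    ∑ x ∈ admissibleLetters w, f x =
      ∑ x ∈ Ico (lastRunHead w) (w.getLastD 0), f x + f (w.getLastD 0) +
        f (w.getLastD 0 + 1) := by
  have := lastRunHead_le_getLastD w
  rw [admissibleLetters, ← Ico_add_one_right_eq_Icc, sum_Ico_succ_top (by omega),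
    sum_Ico_succ_top this]

theorem sum_lastRunSpan_concat (hw : w ≠ []) :
    ∑ x ∈ admissibleLetters w, lastRunSpan (w ++ [x]) = 2 * lastRunSpan w + 1 := by
  have := lastRunHead_le_getLastD w
  rw [sum_admissibleLetters, sum_eq_zero fun x hx => ?_]
  · rw [lastRunSpan_concat hw, lastRunSpan_concat hw, if_pos le_rfl, if_pos (Nat.le_succ _),
      lastRunSpan]
    omega
  · rw [lastRunSpan_concat hw, if_neg (not_le.2 (mem_Ico.1 hx).2)]

theorem sum_endsWithAscent_concat (hw : w ≠ []) :
    ∑ x ∈ admissibleLetters w, (if EndsWithAscent (w ++ [x]) then 1 else 0) = 1 := by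
  rw [sum_admissibleLetters, sum_eq_zero fun x hx => ?_]
  · simp [endsWithAscent_concat_iff hw]
  · rw [if_neg ((endsWithAscent_concat_iff hw x).not.2 (not_lt.2 (mem_Ico.1 hx).2.le))]

theorem sum_numOcc_121_concat (hw : w ≠ []) :
    ∑ x ∈ admissibleLetters w, numOcc [1, 2, 1] (w ++ [x]) =
      (lastRunSpan w + 2) * numOcc [1, 2, 1] w + if EndsWithAscent w then 1 else 0 := by
  simp only [numOcc_121_concat hw, sum_add_distrib, sum_const, card_admissibleLetters,
    smul_eq_mul]
  congr 1
  by_cases hasc : EndsWithAscent w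
  · have hpen : w.getD (w.length - 2) 0 ∈ admissibleLetters w :=
      mem_Icc.2 ⟨hasc.lastRunHead_le, by have := hasc.2; omega⟩
    simp only [hasc, true_and, sum_ite_eq', hpen, if_true]
  · simp only [hasc, false_and, if_false, sum_const_zero]

theorem sum_lastRunSpan_mul_numOcc_121_concat (hw : w ≠ []) :
    ∑ x ∈ admissibleLetters w, lastRunSpan (w ++ [x]) * numOcc [1, 2, 1] (w ++ [x]) =
      (2 * lastRunSpan w + 1) * numOcc [1, 2, 1] w := by
  have hocc {x} (hx : w.getLastD 0 ≤ x) : numOcc [1, 2, 1] (w ++ [x]) = numOcc [1, 2, 1] w := by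
    rw [numOcc_121_concat hw, if_neg fun h => by have := h.1.2; omega, add_zero]
  rw [sum_admissibleLetters, sum_eq_zero fun x hx => ?_]
  · rw [hocc le_rfl, hocc (Nat.le_succ _), lastRunSpan_concat hw, lastRunSpan_concat hw,
      if_pos le_rfl, if_pos (Nat.le_succ _), lastRunSpan]
    have := lastRunHead_le_getLastD w
    rw [show w.getLastD 0 + 1 - lastRunHead w = w.getLastD 0 - lastRunHead w + 1 by omega]
    ring
  · rw [lastRunSpan_concat hw, if_neg (not_le.2 (mem_Ico.1 hx).2), zero_mul]

end Extension

section Totals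

variable {n : ℕ}

local notation "𝓕" => flatCatFinset

theorem ne_nil_of_mem_flatCatFinset {w : List ℕ} (hw : w ∈ 𝓕 n) : w ≠ [] := by
  rw [← mem_coe, coe_flatCatFinset] at hw
  exact hw.2.1.1

theorem card_flatCatFinset_succ (hn : n ≠ 0) :
    #(𝓕 (n + 1)) = 2 * #(𝓕 n) + ∑ w ∈ 𝓕 n, lastRunSpan w := by
  rw [card_eq_sum_ones, sum_flatCatFinset_succ hn, card_eq_sum_ones (𝓕 n), mul_sum,
    ← sum_add_distrib]
  exact sum_congr rfl fun w _ => by rw [← card_eq_sum_ones, card_admissibleLetters]; ring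

theorem sum_lastRunSpan_succ (hn : n ≠ 0) :
    ∑ w ∈ 𝓕 (n + 1), lastRunSpan w = 2 * ∑ w ∈ 𝓕 n, lastRunSpan w + #(𝓕 n) := by
  rw [sum_flatCatFinset_succ hn, sum_congr rfl fun w hw =>
    sum_lastRunSpan_concat (ne_nil_of_mem_flatCatFinset hw), sum_add_distrib, ← mul_sum,
    card_eq_sum_ones]

theorem sum_endsWithAscent_succ (hn : n ≠ 0) :
    ∑ w ∈ 𝓕 (n + 1), (if EndsWithAscent w then 1 else 0) = #(𝓕 n) := by
  rw [sum_flatCatFinset_succ hn, sum_congr rfl fun w hw =>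
    sum_endsWithAscent_concat (ne_nil_of_mem_flatCatFinset hw), card_eq_sum_ones]

theorem sum_numOcc_121_succ (hn : n ≠ 0) :
    ∑ w ∈ 𝓕 (n + 1), numOcc [1, 2, 1] w =
      2 * ∑ w ∈ 𝓕 n, numOcc [1, 2, 1] w +
        ∑ w ∈ 𝓕 n, lastRunSpan w * numOcc [1, 2, 1] w +
        ∑ w ∈ 𝓕 n, (if EndsWithAscent w then 1 else 0) := by
  rw [sum_flatCatFinset_succ hn, sum_congr rfl fun w hw =>
    sum_numOcc_121_concat (ne_nil_of_mem_flatCatFinset hw), mul_sum, ← sum_add_distrib,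
    ← sum_add_distrib]
  exact sum_congr rfl fun w _ => by ring

theorem sum_lastRunSpan_mul_numOcc_121_succ (hn : n ≠ 0) :
    ∑ w ∈ 𝓕 (n + 1), lastRunSpan w * numOcc [1, 2, 1] w =
      2 * ∑ w ∈ 𝓕 n, lastRunSpan w * numOcc [1, 2, 1] w +
        ∑ w ∈ 𝓕 n, numOcc [1, 2, 1] w := by
  rw [sum_flatCatFinset_succ hn, sum_congr rfl fun w hw =>
    sum_lastRunSpan_mul_numOcc_121_concat (ne_nil_of_mem_flatCatFinset hw), mul_sum,
    ← sum_add_distrib]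
  exact sum_congr rfl fun w _ => by ring

theorem card_flatCatFinset_and_sum_lastRunSpan (k : ℕ) :
    2 * #(𝓕 (k + 1)) = 3 ^ k + 1 ∧ 2 * ∑ w ∈ 𝓕 (k + 1), lastRunSpan w + 1 = 3 ^ k := by
  induction k with
  | zero => exact ⟨rfl, rfl⟩
  | succ k ih =>
    rw [card_flatCatFinset_succ (n := k + 1) (by omega),
      sum_lastRunSpan_succ (n := k + 1) (by omega), pow_succ]
    omega

-- The closed forms multiplied by `3`, so that no negative power of `3` occurs at `n = 2`.
theorem sum_numOcc_121_and_sum_lastRunSpan_mul (k : ℕ) :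
    12 * ∑ w ∈ 𝓕 (k + 2), numOcc [1, 2, 1] w + 3 = (k + 3) * 3 ^ k + 3 * k ∧
      12 * ∑ w ∈ 𝓕 (k + 2), lastRunSpan w * numOcc [1, 2, 1] w + 3 * k = k * 3 ^ k := by
  induction k with
  | zero =>
    have hocc : numOcc [1, 2, 1] [1] = 0 := by rw [numOcc_eq_card]; rfl
    rw [sum_numOcc_121_succ one_ne_zero, sum_lastRunSpan_mul_numOcc_121_succ one_ne_zero]
    simp [flatCatFinset, hocc, EndsWithAscent]
  | succ k ih =>
    have hf := (card_flatCatFinset_and_sum_lastRunSpan k).1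
    have hT := sum_numOcc_121_succ (n := k + 2) (by omega)
    have hS := sum_lastRunSpan_mul_numOcc_121_succ (n := k + 2) (by omega)
    have hA := sum_endsWithAscent_succ (n := k + 1) (by omega)
    rw [show k + 1 + 2 = k + 2 + 1 by ring, pow_succ]
    constructor <;> linarith [ih.1, ih.2]

end Totals

/-- For every `n ≥ 2`, `4·tot_n(121) = (n+1)·3^(n−3) + n − 3`, as an equality
of real numbers (with an integer exponent, so that the `n = 2` case reads
`4·tot_2(121) = 3·3^(−1) − 1 = 0`). -/
theorem tot_121 (n : ℕ) (hn : 2 ≤ n) :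
    (4 * tot n [1, 2, 1] : ℝ)
      = ((n : ℝ) + 1) * (3 : ℝ) ^ ((n : ℤ) - 3) + (n : ℝ) - 3 := by
  obtain ⟨k, rfl⟩ := Nat.exists_eq_add_of_le' hn
  have h := (sum_numOcc_121_and_sum_lastRunSpan_mul k).1
  rw [← tot_eq_sum_flatCatFinset] at h
  have h' : (12 * tot (k + 2) [1, 2, 1] + 3 : ℝ) = (k + 3) * 3 ^ k + 3 * k := by exact_mod_cast h
  have hpow : (3 : ℝ) ^ ((k : ℤ) + 2 - 3) * 3 = 3 ^ k := by
    rw [show (k : ℤ) + 2 - 3 = k - 1 by ring, zpow_sub_one₀ (by norm_num), zpow_natCast,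
      inv_mul_cancel_right₀ (by norm_num)]
  push_cast
  linear_combination h' / 3 - (k + 3 : ℝ) / 3 * hpow
end

section
/- The joint distribution of (#231, #221) on 𝓕_n is symmetric: for all n ≥ 1 and all a, b ≥ 0, the number of π ∈ 𝓕_n with #231(π) = a and #221(π) = b equals the number of π ∈ 𝓕_n with #231(π) = b and #221(π) = a. In particular, the consecutive patterns 231 and 221 are equidistributed on 𝓕_n for every n ≥ 1. -/
open scoped BigOperators

def locSwap (x v y : ℕ) : ℕ :=
  if x < v ∧ y < x then v - 1 else if x = v ∧ y < v then v + 1 else v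

def phi (w : List ℕ) : List ℕ :=
  (List.range w.length).map fun j =>
    if 1 ≤ j ∧ j + 1 < w.length then
      locSwap (w.getD (j-1) 0) (w.getD j 0) (w.getD (j+1) 0)
    else w.getD j 0

lemma phi_length (w : List ℕ) : (phi w).length = w.length := by simp [phi]

lemma phi_getD_eq (w : List ℕ) (j : ℕ) :
    (phi w).getD j 0 =
      if 1 ≤ j ∧ j + 1 < w.length then
        locSwap (w.getD (j-1) 0) (w.getD j 0) (w.getD (j+1) 0)
      else w.getD j 0 := by
  by_cases hj : j < w.length
  · have : (phi w).getD j 0 = (phi w)[j]'(by simpa [phi_length]) := by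
      rw [List.getD_eq_getElem]
    rw [this]
    simp [phi]
  · have h1 : (phi w).getD j 0 = 0 := List.getD_eq_default _ _ (by simpa [phi_length] using hj)
    have h2 : w.getD j 0 = 0 := List.getD_eq_default _ _ (by omega)
    rw [h1, h2, if_neg (by omega)]

lemma posD {w : List ℕ} (hw : IsCatalan w) (i : ℕ) :
    w.length ≤ i ∨ 1 ≤ w.getD i 0 := by
  by_cases h : i < w.length
  · right
    rcases i with _ | k
    · exact hw.2.1.ge
    · exact (hw.2.2 k h).1
  · left; omega

lemma zeroD (w : List ℕ) (i : ℕ) : i < w.length ∨ w.getD i 0 = 0 := by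
  by_cases h : i < w.length
  · exact Or.inl h
  · exact Or.inr (List.getD_eq_default _ _ (by omega))

lemma stepD {w : List ℕ} (hw : IsCatalan w) (j : ℕ) :
    w.getD j 0 ≤ w.getD (j - 1) 0 + 1 := by
  rcases j with _ | k
  · simp
  · by_cases h : k + 1 < w.length
    · simpa using (hw.2.2 k h).2
    · rw [List.getD_eq_default _ _ (by omega)]; omega

lemma succD {w : List ℕ} (hw : IsCatalan w) (j : ℕ) :
    w.getD (j + 1) 0 ≤ w.getD j 0 + 1 := by
  by_cases h : j + 1 < w.length
  · exact (hw.2.2 j h).2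
  · rw [List.getD_eq_default _ _ (by omega)]; omega

lemma catalan_phi {w : List ℕ} (hw : IsCatalan w) : IsCatalan (phi w) := by
  obtain ⟨hne, h0, hstep⟩ := hw
  have hw' : IsCatalan w := ⟨hne, h0, hstep⟩
  refine ⟨?_, ?_, ?_⟩
  · intro h
    have := phi_length w
    rw [h] at this
    exact hne (List.length_eq_zero_iff.mp this.symm)
  · rw [phi_getD_eq, if_neg (by omega)]; exact h0
  · intro j hj
    rw [phi_length] at hj
    rw [phi_getD_eq w (j+1), phi_getD_eq w j]
    rcases j with _ | k
    · simp only [Nat.zero_add, show (1:ℕ)-1 = 0 by omega, show (1:ℕ)+1 = 2 by omega]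
      have f1 := succD hw' 0
      have f2 := succD hw' 1
      have f3 := posD hw' 1
      have f4 := posD hw' 2
      simp only [show (0:ℕ)+1 = 1 by omega, show (1:ℕ)+1 = 2 by omega] at f1 f2
      unfold locSwap
      split_ifs <;> omega
    · simp only [show k+1+1 = k+2 by omega, show k+2+1 = k+3 by omega,
        show k+2-1 = k+1 by omega, show k+1-1 = k by omega]
      have f1 := hstep k (by omega)
      have f2 := hstep (k+1) (by simpa using hj)
      simp only [show k+1+1 = k+2 by omega] at f2
      have f3 := succD hw' (k+2)
      simp only [show k+2+1 = k+3 by omega] at f3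
      have f4 := posD hw' k
      have f5 := posD hw' (k+1)
      have f6 := posD hw' (k+2)
      have f7 := posD hw' (k+3)
      have f8 := zeroD w (k+3)
      unfold locSwap
      split_ifs <;> omega

lemma eq_of_getD {v w : List ℕ} (hl : v.length = w.length)
    (h : ∀ j, v.getD j 0 = w.getD j 0) : v = w := by
  apply List.ext_getElem hl
  intro i h1 h2
  have := h i
  rwa [List.getD_eq_getElem _ _ h1, List.getD_eq_getElem _ _ h2] at this

set_option maxHeartbeats 3000000 in
lemma phi_phi {w : List ℕ} (hw : IsCatalan w) : phi (phi w) = w := by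
  obtain ⟨hne, h0, hstep⟩ := hw
  have hw' : IsCatalan w := ⟨hne, h0, hstep⟩
  apply eq_of_getD (by rw [phi_length, phi_length])
  intro j
  rw [phi_getD_eq (phi w) j, phi_length]
  rcases j with _ | k
  · rw [if_neg (by omega), phi_getD_eq, if_neg (by omega)]
  · simp only [show k+1-1 = k by omega, show k+1+1 = k+2 by omega]
    rw [phi_getD_eq w k, phi_getD_eq w (k+1), phi_getD_eq w (k+2)]
    simp only [show k+1-1 = k by omega, show k+1+1 = k+2 by omega,
      show k+2-1 = k+1 by omega, show k+2+1 = k+3 by omega]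
    have f1 := stepD hw' k
    have f2 := succD hw' k
    have f3 := succD hw' (k+1)
    have f4 := succD hw' (k+2)
    simp only [show k+1+1 = k+2 by omega, show k+2+1 = k+3 by omega] at f3 f4
    have g1 := posD hw' (k-1)
    have g2 := posD hw' k
    have g3 := posD hw' (k+1)
    have g4 := posD hw' (k+2)
    have g5 := posD hw' (k+3)
    have z1 := zeroD w (k+2)
    have z2 := zeroD w (k+3)
    unfold locSwap
    split_ifs <;> omega

lemma occ231_iff (w : List ℕ) (i : ℕ) :
    OccAt [2,3,1] w i ↔ i + 3 ≤ w.length ∧ w.getD i 0 < w.getD (i+1) 0 ∧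
      w.getD (i+2) 0 < w.getD i 0 := by
  constructor
  · rintro ⟨hl, h⟩
    have e1 := h 0 (by norm_num) 1 (by norm_num)
    have e2 := h 2 (by norm_num) 0 (by norm_num)
    simp only [List.getD_cons_zero, List.getD_cons_succ, Nat.add_zero] at e1 e2
    exact ⟨by simpa using hl, by omega, by omega⟩
  · rintro ⟨hl, h1, h2⟩
    refine ⟨by simpa using hl, ?_⟩
    intro s hs t ht
    simp only [List.length_cons, List.length_nil] at hs ht
    interval_cases s <;> interval_cases t <;>
      simp only [List.getD_cons_zero, List.getD_cons_succ, Nat.add_zero] <;> omega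

lemma occ221_iff (w : List ℕ) (i : ℕ) :
    OccAt [2,2,1] w i ↔ i + 3 ≤ w.length ∧ w.getD i 0 = w.getD (i+1) 0 ∧
      w.getD (i+2) 0 < w.getD i 0 := by
  constructor
  · rintro ⟨hl, h⟩
    have e1 := h 0 (by norm_num) 1 (by norm_num)
    have e2 := h 1 (by norm_num) 0 (by norm_num)
    have e3 := h 2 (by norm_num) 0 (by norm_num)
    simp only [List.getD_cons_zero, List.getD_cons_succ, Nat.add_zero] at e1 e2 e3
    exact ⟨by simpa using hl, by omega, by omega⟩
  · rintro ⟨hl, h1, h2⟩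
    refine ⟨by simpa using hl, ?_⟩
    intro s hs t ht
    simp only [List.length_cons, List.length_nil] at hs ht
    interval_cases s <;> interval_cases t <;>
      simp only [List.getD_cons_zero, List.getD_cons_succ, Nat.add_zero] <;> omega

set_option maxHeartbeats 2000000 in
lemma occ_swap1 {w : List ℕ} (hw : IsCatalan w) (i : ℕ) :
    OccAt [2,2,1] w i → OccAt [2,3,1] (phi w) i := by
  rw [occ221_iff, occ231_iff, phi_length]
  rintro ⟨hl, h1, h2⟩
  refine ⟨hl, ?_⟩
  rw [phi_getD_eq w i, phi_getD_eq w (i+1), phi_getD_eq w (i+2)]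
  simp only [show i+1-1 = i by omega, show i+1+1 = i+2 by omega,
    show i+2-1 = i+1 by omega, show i+2+1 = i+3 by omega]
  have f1 := succD hw i
  unfold locSwap
  split_ifs <;> omega

set_option maxHeartbeats 2000000 in
lemma occ_swap2 {w : List ℕ} (hw : IsCatalan w) (i : ℕ) :
    OccAt [2,3,1] w i → OccAt [2,2,1] (phi w) i := by
  rw [occ221_iff, occ231_iff, phi_length]
  rintro ⟨hl, h1, h2⟩
  refine ⟨hl, ?_⟩
  rw [phi_getD_eq w i, phi_getD_eq w (i+1), phi_getD_eq w (i+2)]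
  simp only [show i+1-1 = i by omega, show i+1+1 = i+2 by omega,
    show i+2-1 = i+1 by omega, show i+2+1 = i+3 by omega]
  have f1 := succD hw i
  have g1 := posD hw i
  unfold locSwap
  split_ifs <;> omega

lemma occ_iff1 {w : List ℕ} (hw : IsCatalan w) (i : ℕ) :
    OccAt [2,3,1] (phi w) i ↔ OccAt [2,2,1] w i := by
  constructor
  · intro h
    have := occ_swap2 (catalan_phi hw) i h
    rwa [phi_phi hw] at this
  · exact occ_swap1 hw i

lemma occ_iff2 {w : List ℕ} (hw : IsCatalan w) (i : ℕ) :
    OccAt [2,2,1] (phi w) i ↔ OccAt [2,3,1] w i := by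
  constructor
  · intro h
    have := occ_swap1 (catalan_phi hw) i h
    rwa [phi_phi hw] at this
  · exact occ_swap2 hw i

lemma numOcc_phi1 {w : List ℕ} (hw : IsCatalan w) :
    numOcc [2,3,1] (phi w) = numOcc [2,2,1] w := by
  unfold numOcc
  congr 1
  ext i
  exact occ_iff1 hw i

lemma numOcc_phi2 {w : List ℕ} (hw : IsCatalan w) :
    numOcc [2,2,1] (phi w) = numOcc [2,3,1] w := by
  unfold numOcc
  congr 1
  ext i
  exact occ_iff2 hw i

lemma runStart_phi {w : List ℕ} (hw : IsCatalan w) {i : ℕ} (h : RunStart w i) :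
    RunStart (phi w) i ∧ (phi w).getD i 0 = w.getD i 0 := by
  obtain ⟨hi, hcase⟩ := h
  rcases i with _ | k
  · exact ⟨⟨by rwa [phi_length], Or.inl rfl⟩, by rw [phi_getD_eq, if_neg (by omega)]⟩
  · have hlt : w.getD (k+1) 0 < w.getD k 0 := by
      simpa using hcase.resolve_left (by omega)
    have hval : (phi w).getD (k+1) 0 = w.getD (k+1) 0 := by
      rw [phi_getD_eq w (k+1)]
      simp only [show k+1-1 = k by omega, show k+1+1 = k+2 by omega]
      unfold locSwap
      split_ifs <;> omega
    refine ⟨⟨by rwa [phi_length], Or.inr ?_⟩, hval⟩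
    simp only [show k+1-1 = k by omega]
    rw [hval, phi_getD_eq w k]
    have f1 := stepD hw k
    have g1 := posD hw k
    unfold locSwap
    split_ifs <;> omega

lemma phi_mem {n : ℕ} {w : List ℕ} (h : w ∈ FlatCat n) : phi w ∈ FlatCat n := by
  obtain ⟨hlen, hcat, hflat⟩ := h
  refine ⟨by rw [phi_length, hlen], catalan_phi hcat, ?_⟩
  intro i j hi hj hij
  have hcat' := catalan_phi hcat
  have ri := runStart_phi hcat' hi
  have rj := runStart_phi hcat' hj
  rw [phi_phi hcat] at ri rj
  rw [← ri.2, ← rj.2]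
  exact hflat i j ri.1 rj.1 hij

lemma ncard_phi_swap {n : ℕ} (S T : Set (List ℕ))
    (hS : ∀ w ∈ S, w ∈ FlatCat n) (hT : ∀ w ∈ T, w ∈ FlatCat n)
    (hST : ∀ w ∈ S, phi w ∈ T) (hTS : ∀ w ∈ T, phi w ∈ S) :
    S.ncard = T.ncard := by
  have hinvS : ∀ w ∈ S, phi (phi w) = w := fun w hw => phi_phi (hS w hw).2.1
  have hinvT : ∀ w ∈ T, phi (phi w) = w := fun w hw => phi_phi (hT w hw).2.1
  have himg : phi '' S = T := by
    apply Set.Subset.antisymm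
    · rintro _ ⟨w, hw, rfl⟩; exact hST w hw
    · intro w hw
      exact ⟨phi w, hTS w hw, hinvT w hw⟩
  have hinj : Set.InjOn phi S := fun x hx y hy hxy => by
    rw [← hinvS x hx, ← hinvS y hy, hxy]
  rw [← himg, Set.ncard_image_of_injOn hinj]

/-- The joint distribution of `(#231, #221)` on flattened Catalan words of
length `n` is symmetric for every `n ≥ 1`; in particular the consecutive
patterns `231` and `221` are equidistributed on `𝓕_n`. -/
theorem joint_231_221_symmetric (n : ℕ) (hn : 1 ≤ n) :
    (∀ a b : ℕ,
      {w ∈ FlatCat n | numOcc [2, 3, 1] w = a ∧ numOcc [2, 2, 1] w = b}.ncard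
        = {w ∈ FlatCat n | numOcc [2, 3, 1] w = b ∧ numOcc [2, 2, 1] w = a}.ncard) ∧
    (∀ k : ℕ,
      {w ∈ FlatCat n | numOcc [2, 3, 1] w = k}.ncard
        = {w ∈ FlatCat n | numOcc [2, 2, 1] w = k}.ncard) := by
  constructor
  · intro a b
    apply ncard_phi_swap (n := n)
    · rintro w ⟨hw, -⟩; exact hw
    · rintro w ⟨hw, -⟩; exact hw
    · rintro w ⟨hw, h1, h2⟩
      exact ⟨phi_mem hw, by rw [numOcc_phi1 hw.2.1, h2], by rw [numOcc_phi2 hw.2.1, h1]⟩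
    · rintro w ⟨hw, h1, h2⟩
      exact ⟨phi_mem hw, by rw [numOcc_phi1 hw.2.1, h2], by rw [numOcc_phi2 hw.2.1, h1]⟩
  · intro k
    apply ncard_phi_swap (n := n)
    · rintro w ⟨hw, -⟩; exact hw
    · rintro w ⟨hw, -⟩; exact hw
    · rintro w ⟨hw, h1⟩
      exact ⟨phi_mem hw, by rw [numOcc_phi2 hw.2.1, h1]⟩
    · rintro w ⟨hw, h1⟩
      exact ⟨phi_mem hw, by rw [numOcc_phi1 hw.2.1, h1]⟩
end

section
/- Fix p, q, r, y ∈ ℚ and let A ∈ ℚ[[x]] be the formal power series whose coefficient of x^n (n ≥ 1) is Σ_{π ∈ 𝓕_n} p^(asc(π)) · q^(des(π)) · r^(lev(π)) · y^(trun(π)−1), and whose constant coefficient is 0. Then (1 − (r + p·y)·x) · (1 − 2(p+r)·x + ((p+r)² − p·q)·x²) · A = x·(1 − (p+r)·x)² as formal power series in ℚ[[x]]. -/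
open scoped BigOperators

/-- The number of ascents of `w`. -/
noncomputable def asc (w : List ℕ) : ℕ :=
  Set.ncard {i | i + 1 < w.length ∧ w.getD i 0 < w.getD (i + 1) 0}

/-- The number of descents of `w`. -/
noncomputable def des (w : List ℕ) : ℕ :=
  Set.ncard {i | i + 1 < w.length ∧ w.getD (i + 1) 0 < w.getD i 0}

/-- The number of levels of `w`. -/
noncomputable def lev (w : List ℕ) : ℕ :=
  Set.ncard {i | i + 1 < w.length ∧ w.getD i 0 = w.getD (i + 1) 0}

/-!
A flattened Catalan word of length `n + 1 ≥ 2` is a flattened Catalan word `w` of length `n`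
followed by a letter `c` with `b ≤ c ≤ ℓ + 1`, where `ℓ` is the last letter of `w` and `b` the
first letter of its terminal run. Since letters rise by at most one, the terminal run consists of
the letters `b, …, ℓ`, so `trun w = ℓ - b + 1`. The `ℓ - b` choices `c < ℓ` create a descent and
reset `trun` to `1`, `c = ℓ` creates a level, and `c = ℓ + 1` an ascent that raises `trun` by one.
Writing `F_n(y)` for the weighted count and `T_n` for the same count with `y ^ (trun - 1)` replaced
by `trun - 1`, this gives `F_{n+1}(y) = (r + p y) F_n(y) + q T_n` and
`T_{n+1} = (p + r) T_n + p F_n(1)`. Eliminating `T` and `F(1)` from the corresponding generating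
functions yields the identity.
-/
theorem PowerSeries.one_sub_C_mul_X_mul_mk {R : Type*} [CommRing R] {a b : R} {f g : ℕ → R}
    (h : ∀ n, f (n + 1) = a * f n + b * g n) :
    (1 - C a * X) * mk f = C (f 0) + C b * X * mk g := by
  ext (_ | n)
  · simp
  · rw [sub_mul, one_mul, mul_assoc, map_sub, map_add, coeff_C_mul, coeff_succ_X_mul,
      mul_assoc, coeff_C_mul, coeff_succ_X_mul, coeff_C, if_neg n.succ_ne_zero, coeff_mk,
      coeff_mk, coeff_mk, h]
    ring

namespace FlattenedCatalan

theorem isChain_drop_iff {α : Type*} (R : α → α → Prop) (w : List α) (d : α) (i : ℕ) :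
    (w.drop i).IsChain R ↔
      ∀ k, i ≤ k → k + 1 < w.length → R (w.getD k d) (w.getD (k + 1) d) := by
  rw [List.isChain_iff_getElem]
  constructor
  · intro h k hik hk
    have := h (k - i) (by rw [List.length_drop]; omega)
    simp only [List.getElem_drop, show i + (k - i) = k by omega,
      show i + (k - i + 1) = k + 1 by omega] at this
    rwa [List.getD_eq_getElem _ _ (by omega), List.getD_eq_getElem _ _ hk]
  · intro h j hj
    rw [List.length_drop] at hj
    have := h (i + j) (by omega) (by omega)
    rw [List.getD_eq_getElem _ _ (by omega), List.getD_eq_getElem _ _ (by omega)] at this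
    simpa [List.getElem_drop, Nat.add_assoc] using this

theorem toFinset_eq_Icc_of_isChain :
    ∀ {l : List ℕ}, l ≠ [] → l.IsChain (fun a b => a ≤ b ∧ b ≤ a + 1) →
      l.toFinset = Finset.Icc (l.headD 0) (l.getLastD 0)
  | [a], _, _ => by simp
  | a :: b :: t, _, h => by
    rw [List.isChain_cons_cons] at h
    have ih := toFinset_eq_Icc_of_isChain (l := b :: t) (by simp) h.2
    have hb : b ≤ (b :: t).getLastD 0 := by
      have : b ∈ (b :: t).toFinset := by simp
      rw [ih, Finset.mem_Icc] at this
      exact this.2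
    rw [List.toFinset_cons, ih]
    ext x
    simp only [Finset.mem_insert, Finset.mem_Icc, List.headD_cons, List.getLastD_cons] at *
    omega

theorem getLastD_eq_getD (w : List ℕ) : w.getLastD 0 = w.getD (w.length - 1) 0 := by
  rw [List.getLastD_eq_getLast?, List.getLast?_eq_getElem?, List.getD_eq_getElem?_getD]

noncomputable def lastRunStart (w : List ℕ) : ℕ :=
  sInf {i | (w.drop i).IsChain (· ≤ ·)}

noncomputable def lastRunHead (w : List ℕ) : ℕ :=
  w.getD (lastRunStart w) 0

theorem trun_def (w : List ℕ) : trun w = (w.drop (lastRunStart w)).toFinset.card :=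
  rfl

theorem isChain_drop_lastRunStart (w : List ℕ) : (w.drop (lastRunStart w)).IsChain (· ≤ ·) :=
  Nat.sInf_mem (s := {i | (w.drop i).IsChain (· ≤ ·)}) ⟨w.length, by simp⟩

theorem getD_le_getD_of_lastRunStart_le {w : List ℕ} {k l : ℕ} (hk : lastRunStart w ≤ k)
    (hkl : k ≤ l) (hl : l < w.length) : w.getD k 0 ≤ w.getD l 0 := by
  have hstep := (isChain_drop_iff _ w 0 _).1 (isChain_drop_lastRunStart w)
  induction l, hkl using Nat.le_induction with
  | base => rfl
  | succ m hkm ih => exact (ih (by omega)).trans (hstep m (by omega) hl)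

theorem lastRunStart_le (w : List ℕ) : lastRunStart w ≤ w.length - 1 :=
  Nat.sInf_le ((isChain_drop_iff _ w 0 _).2 fun k hk hk1 => by omega)

theorem lastRunHead_le_getLastD {w : List ℕ} (hw : w ≠ []) : lastRunHead w ≤ w.getLastD 0 := by
  have := List.length_pos_iff.2 hw
  rw [getLastD_eq_getD]
  exact getD_le_getD_of_lastRunStart_le le_rfl (lastRunStart_le w) (by omega)

theorem lastRunStart_eq_of_runStart {w : List ℕ} {j : ℕ} (hj : RunStart w j)
    (hchain : (w.drop j).IsChain (· ≤ ·)) : lastRunStart w = j := by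
  refine le_antisymm (Nat.sInf_le hchain) (not_lt.1 fun hlt => ?_)
  obtain ⟨hjlen, rfl | hdesc⟩ := hj
  · omega
  have := getD_le_getD_of_lastRunStart_le (w := w) (k := j - 1) (l := j) (by omega) (by omega)
    hjlen
  omega

theorem runStart_lastRunStart {w : List ℕ} (hw : w ≠ []) : RunStart w (lastRunStart w) := by
  have := List.length_pos_iff.2 hw
  refine ⟨by have := lastRunStart_le w; omega, ?_⟩
  rcases Nat.eq_zero_or_pos (lastRunStart w) with h0 | hpos
  · exact Or.inl h0
  have hnot : ¬ (w.drop (lastRunStart w - 1)).IsChain (· ≤ ·) :=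
    Nat.notMem_of_lt_sInf (s := {i | (w.drop i).IsChain (· ≤ ·)}) (Nat.sub_lt hpos one_pos)
  rw [isChain_drop_iff _ w 0] at hnot
  push Not at hnot
  obtain ⟨k, hk, hk1, hdesc⟩ := hnot
  have hstep := (isChain_drop_iff _ w 0 _).1 (isChain_drop_lastRunStart w)
  obtain rfl : k = lastRunStart w - 1 := by
    by_contra hne
    exact absurd (hstep k (by omega) hk1) (by omega)
  right
  rwa [Nat.sub_add_cancel hpos] at hdesc

theorem le_lastRunStart_of_runStart {w : List ℕ} {i : ℕ} (h : RunStart w i) :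
    i ≤ lastRunStart w := by
  by_contra! hlt
  obtain ⟨hi, rfl | hdesc⟩ := h
  · omega
  have := getD_le_getD_of_lastRunStart_le (w := w) (k := i - 1) (l := i) (by omega) (by omega) hi
  omega

theorem trun_eq {w : List ℕ} (hc : IsCatalan w) : trun w = w.getLastD 0 + 1 - lastRunHead w := by
  have hlen := List.length_pos_iff.2 hc.1
  have hJ := lastRunStart_le w
  have hchain : (w.drop (lastRunStart w)).IsChain (fun a b => a ≤ b ∧ b ≤ a + 1) :=
    (isChain_drop_iff _ w 0 _).2 fun k hk hk1 =>
      ⟨(isChain_drop_iff _ w 0 _).1 (isChain_drop_lastRunStart w) k hk hk1, (hc.2.2 k hk1).2⟩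
  have hne : w.drop (lastRunStart w) ≠ [] := by
    rw [Ne, List.drop_eq_nil_iff]; omega
  rw [trun_def, toFinset_eq_Icc_of_isChain hne hchain, Nat.card_Icc]
  simp [List.headD_eq_head?_getD, List.getD_eq_getElem?_getD, List.getLastD_eq_getLast?,
    List.getLast?_drop, show ¬ w.length ≤ lastRunStart w by omega, lastRunHead]

theorem getD_concat_of_lt {w : List ℕ} (c : ℕ) {i : ℕ} (h : i < w.length) :
    (w ++ [c]).getD i 0 = w.getD i 0 :=
  List.getD_append _ _ _ _ h

theorem getD_concat_length (w : List ℕ) (c : ℕ) : (w ++ [c]).getD w.length 0 = c := by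
  simp

theorem getD_concat_pred_length {w : List ℕ} (hw : w ≠ []) (c : ℕ) :
    (w ++ [c]).getD (w.length - 1) 0 = w.getLastD 0 := by
  rw [getD_concat_of_lt c (by simp [List.length_pos_iff.2 hw]), getLastD_eq_getD]

theorem isCatalan_concat_iff {w : List ℕ} (hw : w ≠ []) (c : ℕ) :
    IsCatalan (w ++ [c]) ↔ IsCatalan w ∧ 1 ≤ c ∧ c ≤ w.getLastD 0 + 1 := by
  have hlen := List.length_pos_iff.2 hw
  simp only [IsCatalan, List.length_append, List.length_singleton]
  constructor
  · rintro ⟨-, h0, hstep⟩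
    have hlast := hstep (w.length - 1) (by omega)
    rw [Nat.sub_add_cancel hlen, getD_concat_length, getD_concat_pred_length hw] at hlast
    refine ⟨⟨hw, by rwa [getD_concat_of_lt c hlen] at h0, fun i hi => ?_⟩, hlast⟩
    have := hstep i (by omega)
    rwa [getD_concat_of_lt c hi, getD_concat_of_lt c (by omega)] at this
  · rintro ⟨⟨-, h0, hstep⟩, hc⟩
    refine ⟨by simp, by rwa [getD_concat_of_lt c hlen], fun i hi => ?_⟩
    rcases Nat.lt_or_ge (i + 1) w.length with h | h
    · rw [getD_concat_of_lt c h, getD_concat_of_lt c (by omega)]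
      exact hstep i h
    · obtain rfl : i = w.length - 1 := by omega
      rwa [Nat.sub_add_cancel hlen, getD_concat_length, getD_concat_pred_length hw]

theorem runStart_concat_iff {w : List ℕ} (hw : w ≠ []) (c i : ℕ) :
    RunStart (w ++ [c]) i ↔ RunStart w i ∨ (i = w.length ∧ c < w.getLastD 0) := by
  have hlen := List.length_pos_iff.2 hw
  simp only [RunStart, List.length_append, List.length_singleton]
  rcases Nat.lt_or_ge i w.length with h | h
  · rw [getD_concat_of_lt c h, getD_concat_of_lt c (by omega)]
    constructor
    · rintro ⟨-, hi⟩; exact Or.inl ⟨h, hi⟩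
    · rintro (⟨-, hi⟩ | ⟨rfl, -⟩)
      · exact ⟨by omega, hi⟩
      · omega
  · constructor
    · rintro ⟨hi, rfl | hdesc⟩
      · omega
      · obtain rfl : i = w.length := by omega
        rw [getD_concat_length, getD_concat_pred_length hw] at hdesc
        exact Or.inr ⟨rfl, hdesc⟩
    · rintro (⟨hi, -⟩ | ⟨rfl, hc⟩)
      · omega
      · rw [getD_concat_length, getD_concat_pred_length hw]
        exact ⟨by omega, Or.inr hc⟩

theorem isFlattened_concat_iff {w : List ℕ} (hw : w ≠ []) (c : ℕ) :
    IsFlattened (w ++ [c]) ↔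
      IsFlattened w ∧ (c < w.getLastD 0 → ∀ i, RunStart w i → w.getD i 0 ≤ c) := by
  have hold : ∀ {i}, RunStart w i → RunStart (w ++ [c]) i :=
    fun hi => (runStart_concat_iff hw c _).2 (Or.inl hi)
  constructor
  · intro hf
    refine ⟨fun i j hi hj hij => ?_, fun hc i hi => ?_⟩
    · have := hf i j (hold hi) (hold hj) hij
      rwa [getD_concat_of_lt c hi.1, getD_concat_of_lt c hj.1] at this
    · have := hf i w.length (hold hi) ((runStart_concat_iff hw c _).2 (Or.inr ⟨rfl, hc⟩))
        hi.1.le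
      rwa [getD_concat_of_lt c hi.1, getD_concat_length] at this
  · rintro ⟨hf, hmax⟩ i j hi hj hij
    rw [runStart_concat_iff hw c] at hi hj
    rcases hi with hi | ⟨rfl, -⟩ <;> rcases hj with hj | ⟨rfl, hc⟩
    · rw [getD_concat_of_lt c hi.1, getD_concat_of_lt c hj.1]
      exact hf i j hi hj hij
    · rw [getD_concat_of_lt c hi.1, getD_concat_length]
      exact hmax hc i hi
    · exact absurd hj.1 (by omega)
    · rfl

theorem forall_runStart_getD_le_iff {w : List ℕ} (hw : w ≠ []) (hf : IsFlattened w)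
    (c : ℕ) : (∀ i, RunStart w i → w.getD i 0 ≤ c) ↔ lastRunHead w ≤ c :=
  ⟨fun h => h _ (runStart_lastRunStart hw), fun h i hi =>
    (hf i _ hi (runStart_lastRunStart hw) (le_lastRunStart_of_runStart hi)).trans h⟩

theorem one_le_lastRunHead {w : List ℕ} (hc : IsCatalan w) (hf : IsFlattened w) :
    1 ≤ lastRunHead w := by
  have h0 : RunStart w 0 := ⟨List.length_pos_iff.2 hc.1, Or.inl rfl⟩
  have := hf 0 _ h0 (runStart_lastRunStart hc.1) (Nat.zero_le _)
  rwa [hc.2.1] at this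

theorem concat_mem_flatCat_iff {w : List ℕ} {n : ℕ} (hw : w ∈ FlatCat n) (c : ℕ) :
    w ++ [c] ∈ FlatCat (n + 1) ↔ c ∈ Finset.Icc (lastRunHead w) (w.getLastD 0 + 1) := by
  obtain ⟨hlen, hc, hf⟩ := hw
  have hne : w ≠ [] := hc.1
  simp only [FlatCat, Set.mem_ofPred, List.length_append, List.length_singleton, hlen,
    isCatalan_concat_iff hne, isFlattened_concat_iff hne, forall_runStart_getD_le_iff hne hf,
    Finset.mem_Icc, true_and, hc, hf]
  have := one_le_lastRunHead hc hf
  have := lastRunHead_le_getLastD hne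
  constructor
  · rintro ⟨⟨-, hle⟩, hhead⟩
    rcases lt_or_ge c (w.getLastD 0) with hlt | hge
    exacts [⟨hhead hlt, hle⟩, ⟨by omega, hle⟩]
  · rintro ⟨hhead, hle⟩
    exact ⟨⟨by omega, hle⟩, fun _ => hhead⟩

theorem ncard_adjacent_eq_card (P : ℕ → ℕ → Prop) [DecidableRel P] (w : List ℕ) :
    {i | i + 1 < w.length ∧ P (w.getD i 0) (w.getD (i + 1) 0)}.ncard =
      ((Finset.range (w.length - 1)).filter fun i => P (w.getD i 0) (w.getD (i + 1) 0)).card := by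
  rw [← Set.ncard_coe_finset]
  congr
  ext i
  rw [Finset.mem_val, Finset.mem_filter, Finset.mem_range]
  exact and_congr_left fun _ => by omega

theorem ncard_adjacent_concat (P : ℕ → ℕ → Prop) [DecidableRel P] {w : List ℕ} (hw : w ≠ [])
    (c : ℕ) :
    {i | i + 1 < (w ++ [c]).length ∧ P ((w ++ [c]).getD i 0) ((w ++ [c]).getD (i + 1) 0)}.ncard =
      {i | i + 1 < w.length ∧ P (w.getD i 0) (w.getD (i + 1) 0)}.ncard +
        if P (w.getLastD 0) c then 1 else 0 := by
  have hlen := List.length_pos_iff.2 hw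
  rw [ncard_adjacent_eq_card, ncard_adjacent_eq_card, List.length_append, List.length_singleton,
    Nat.add_sub_cancel, ← Nat.sub_add_cancel hlen, Finset.range_add_one, Finset.filter_insert,
    Nat.sub_add_cancel hlen, getD_concat_length, getD_concat_pred_length hw]
  have hold : (Finset.range (w.length - 1)).filter
        (fun i => P ((w ++ [c]).getD i 0) ((w ++ [c]).getD (i + 1) 0)) =
      (Finset.range (w.length - 1)).filter fun i => P (w.getD i 0) (w.getD (i + 1) 0) :=
    Finset.filter_congr fun i hi => by
      rw [Finset.mem_range] at hi
      rw [getD_concat_of_lt c (by omega), getD_concat_of_lt c (by omega)]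
  split_ifs
  · rw [hold, Finset.card_insert_of_notMem (by simp)]
  · rw [hold, Nat.add_zero]

theorem asc_concat {w : List ℕ} (hw : w ≠ []) (c : ℕ) :
    asc (w ++ [c]) = asc w + if w.getLastD 0 < c then 1 else 0 :=
  ncard_adjacent_concat (· < ·) hw c

theorem des_concat {w : List ℕ} (hw : w ≠ []) (c : ℕ) :
    des (w ++ [c]) = des w + if c < w.getLastD 0 then 1 else 0 :=
  ncard_adjacent_concat (fun a b => b < a) hw c

theorem lev_concat {w : List ℕ} (hw : w ≠ []) (c : ℕ) :
    lev (w ++ [c]) = lev w + if w.getLastD 0 = c then 1 else 0 :=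
  ncard_adjacent_concat (· = ·) hw c

theorem lastRunStart_concat_of_le {w : List ℕ} (hw : w ≠ []) {c : ℕ} (hc : w.getLastD 0 ≤ c) :
    lastRunStart (w ++ [c]) = lastRunStart w := by
  have hJ := lastRunStart_le w
  have hlen := List.length_pos_iff.2 hw
  apply lastRunStart_eq_of_runStart
  · exact (runStart_concat_iff hw c _).2 (Or.inl (runStart_lastRunStart hw))
  · rw [List.drop_append_of_le_length (by omega)]
    refine (isChain_drop_lastRunStart w).append (List.isChain_singleton c) fun x hx y hy => ?_
    simp only [List.head?_cons, Option.mem_some_iff] at hy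
    rw [List.getLast?_drop, if_neg (by omega)] at hx
    have : w.getLastD 0 = x := by simp [Option.mem_def.1 hx]
    omega

theorem lastRunStart_concat_of_lt {w : List ℕ} (hw : w ≠ []) {c : ℕ} (hc : c < w.getLastD 0) :
    lastRunStart (w ++ [c]) = w.length :=
  lastRunStart_eq_of_runStart ((runStart_concat_iff hw c _).2 (Or.inr ⟨rfl, hc⟩)) (by simp)

theorem trun_concat {w : List ℕ} (hw : w ≠ []) {c : ℕ} (hcat : IsCatalan (w ++ [c])) :
    trun (w ++ [c]) = if c < w.getLastD 0 then 1 else trun w + (c - w.getLastD 0) := by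
  have hc := ((isCatalan_concat_iff hw c).1 hcat).1
  have hJ := lastRunStart_le w
  have hlen := List.length_pos_iff.2 hw
  have hhead := lastRunHead_le_getLastD hw
  rw [trun_eq hcat, trun_eq hc, List.getLastD_concat, lastRunHead]
  split_ifs with hlt
  · rw [lastRunStart_concat_of_lt hw hlt, getD_concat_length]
    omega
  · rw [lastRunStart_concat_of_le hw (not_lt.1 hlt), getD_concat_of_lt c (by omega),
      ← lastRunHead]
    omega

theorem flatCat_zero : FlatCat 0 = ∅ :=
  Set.eq_empty_of_forall_notMem fun _ ⟨hlen, hc, _⟩ => hc.1 (List.length_eq_zero_iff.1 hlen)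

theorem flatCat_one : FlatCat 1 = {[1]} := by
  ext w
  simp only [FlatCat, Set.mem_ofPred, Set.mem_singleton_iff]
  constructor
  · rintro ⟨hlen, hc, -⟩
    obtain ⟨a, rfl⟩ := List.length_eq_one_iff.1 hlen
    simpa using hc.2.1
  · rintro rfl
    refine ⟨rfl, ⟨by simp, rfl, fun i hi => by simp at hi⟩, fun i j hi hj _ => ?_⟩
    have := hi.1
    have := hj.1
    simp only [List.length_singleton] at *
    obtain rfl : i = j := by omega
    rfl

theorem dropLast_concat_mem_flatCat {u : List ℕ} {n : ℕ} (hu : u ∈ FlatCat (n + 1))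
    (hn : n ≠ 0) : u.dropLast ∈ FlatCat n ∧ u.dropLast ++ [u.getLastD 0] = u := by
  obtain ⟨hlen, hc, hf⟩ := hu
  have heq : u.dropLast ++ [u.getLastD 0] = u := by
    rw [List.getLastD_eq_getLast?, List.getLast?_eq_some_getLast hc.1]
    exact List.dropLast_concat_getLast hc.1
  have hne : u.dropLast ≠ [] := by
    rw [← List.length_pos_iff, List.length_dropLast]; omega
  rw [← heq, isCatalan_concat_iff hne] at hc
  rw [← heq, isFlattened_concat_iff hne] at hf
  exact ⟨⟨by simp [hlen], hc.1, hf.1⟩, heq⟩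

theorem flatCat_finite : ∀ n, (FlatCat n).Finite
  | 0 => by simp [flatCat_zero]
  | 1 => by simp [flatCat_one]
  | n + 2 => by
    refine ((flatCat_finite (n + 1)).biUnion fun w _ =>
      (Finset.Icc (lastRunHead w) (w.getLastD 0 + 1)).finite_toSet.image (w ++ [·])).subset ?_
    intro u hu
    obtain ⟨hw, heq⟩ := dropLast_concat_mem_flatCat hu (by omega)
    refine Set.mem_biUnion hw ⟨u.getLastD 0, ?_, heq⟩
    rw [Finset.mem_coe, ← concat_mem_flatCat_iff hw, heq]
    exact hu

theorem sum_flatCat_succ {M : Type*} [AddCommMonoid M] {n : ℕ} (hn : n ≠ 0)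
    (Φ : List ℕ → M) :
    ∑ u ∈ (flatCat_finite (n + 1)).toFinset, Φ u =
      ∑ w ∈ (flatCat_finite n).toFinset,
        ∑ c ∈ Finset.Icc (lastRunHead w) (w.getLastD 0 + 1), Φ (w ++ [c]) := by
  rw [Finset.sum_sigma']
  refine Finset.sum_nbij' (fun u => ⟨u.dropLast, u.getLastD 0⟩) (fun x => x.1 ++ [x.2])
    ?_ ?_ ?_ ?_ ?_
  · intro u hu
    rw [Set.Finite.mem_toFinset] at hu
    obtain ⟨hw, heq⟩ := dropLast_concat_mem_flatCat hu hn
    rw [Finset.mem_sigma, Set.Finite.mem_toFinset, ← concat_mem_flatCat_iff hw, heq]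
    exact ⟨hw, hu⟩
  · rintro ⟨w, c⟩ hx
    rw [Finset.mem_sigma, Set.Finite.mem_toFinset] at hx
    rw [Set.Finite.mem_toFinset]
    exact (concat_mem_flatCat_iff hx.1 c).2 hx.2
  · intro u hu
    exact (dropLast_concat_mem_flatCat ((Set.Finite.mem_toFinset _).1 hu) hn).2
  · rintro ⟨w, c⟩ _
    simp
  · intro u hu
    rw [(dropLast_concat_mem_flatCat ((Set.Finite.mem_toFinset _).1 hu) hn).2]

section Weights

variable {R : Type*} [CommSemiring R] (p q r : R)

/-- `g` is arbitrary so that one recursion covers both `y ^ (trun w - 1)` and `trun w - 1`. -/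
noncomputable def weight (g : ℕ → R) (w : List ℕ) : R :=
  p ^ asc w * q ^ des w * r ^ lev w * g (trun w - 1)

noncomputable def weightSum (g : ℕ → R) (n : ℕ) : R :=
  ∑ w ∈ (flatCat_finite n).toFinset, weight p q r g w

variable {p q r}

theorem weight_concat_of_lt (g : ℕ → R) {w : List ℕ} (hw : w ≠ []) {c : ℕ}
    (hcat : IsCatalan (w ++ [c])) (hc : c < w.getLastD 0) :
    weight p q r g (w ++ [c]) = q * g 0 * (p ^ asc w * q ^ des w * r ^ lev w) := by
  rw [weight, asc_concat hw, des_concat hw, lev_concat hw, trun_concat hw hcat, if_pos hc,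
    if_neg (by omega), if_pos hc, if_neg (by omega)]
  ring

theorem weight_concat_getLastD (g : ℕ → R) {w : List ℕ} (hw : w ≠ [])
    (hcat : IsCatalan (w ++ [w.getLastD 0])) :
    weight p q r g (w ++ [w.getLastD 0]) = r * weight p q r g w := by
  simp only [weight, asc_concat hw, des_concat hw, lev_concat hw, trun_concat hw hcat,
    lt_irrefl, if_false, if_true, Nat.sub_self, add_zero]
  ring

theorem weight_concat_getLastD_succ (g : ℕ → R) {w : List ℕ} (hw : w ≠ [])
    (hcat : IsCatalan (w ++ [w.getLastD 0 + 1])) :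
    weight p q r g (w ++ [w.getLastD 0 + 1]) = p * weight p q r (fun k => g (k + 1)) w := by
  have ht := trun_concat hw hcat
  rw [if_neg (by omega), Nat.add_sub_cancel_left] at ht
  have : trun w ≠ 0 := by
    rw [trun_eq ((isCatalan_concat_iff hw _).1 hcat).1]
    have := lastRunHead_le_getLastD hw
    omega
  rw [weight, weight, asc_concat hw, des_concat hw, lev_concat hw, ht, if_pos (by omega),
    if_neg (by omega), if_neg (by omega), show trun w + 1 - 1 = trun w - 1 + 1 by omega]
  ring

theorem sum_weight_concat (g : ℕ → R) {w : List ℕ} {n : ℕ} (hw : w ∈ FlatCat n) :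
    ∑ c ∈ Finset.Icc (lastRunHead w) (w.getLastD 0 + 1), weight p q r g (w ++ [c]) =
      q * g 0 * weight p q r (fun k => (k : R)) w + r * weight p q r g w +
        p * weight p q r (fun k => g (k + 1)) w := by
  have hne : w ≠ [] := hw.2.1.1
  have hhead := lastRunHead_le_getLastD hne
  have hcat : ∀ c ∈ Finset.Icc (lastRunHead w) (w.getLastD 0 + 1), IsCatalan (w ++ [c]) :=
    fun c hc => ((concat_mem_flatCat_iff hw c).2 hc).2.1
  have htrun : trun w - 1 = w.getLastD 0 - lastRunHead w := by
    rw [trun_eq hw.2.1]; omega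
  rw [Finset.sum_Icc_succ_top (by omega), ← Finset.Ico_add_one_right_eq_Icc,
    Finset.sum_Ico_succ_top hhead,
    Finset.sum_congr rfl fun c hc => weight_concat_of_lt g hne
      (hcat c (Finset.Ico_subset_Icc_self (Finset.Ico_subset_Ico_right (by omega) hc)))
      (Finset.mem_Ico.1 hc).2,
    weight_concat_getLastD g hne (hcat _ (Finset.mem_Icc.2 ⟨hhead, by omega⟩)),
    weight_concat_getLastD_succ g hne (hcat _ (Finset.mem_Icc.2 ⟨by omega, le_rfl⟩)),
    Finset.sum_const, Nat.card_Ico, nsmul_eq_mul]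
  simp only [weight, htrun]
  ring

theorem weightSum_succ (g : ℕ → R) {n : ℕ} (hn : n ≠ 0) :
    weightSum p q r g (n + 1) =
      q * g 0 * weightSum p q r (fun k => (k : R)) n + r * weightSum p q r g n +
        p * weightSum p q r (fun k => g (k + 1)) n := by
  rw [weightSum, sum_flatCat_succ hn, Finset.sum_congr rfl fun w hw =>
    sum_weight_concat g ((Set.Finite.mem_toFinset _).1 hw)]
  simp only [weightSum, Finset.sum_add_distrib, Finset.mul_sum]

theorem weightSum_one (g : ℕ → R) : weightSum p q r g 1 = g 0 := by
  have hfin : (flatCat_finite 1).toFinset = {[1]} := by ext; simp [flatCat_one]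
  have hstart : lastRunStart [1] = 0 := Nat.le_zero.1 (lastRunStart_le [1])
  have htrun : trun [1] = 1 := by
    simp [trun_def, hstart]
  simp [weightSum, hfin, weight, asc, des, lev, htrun]

theorem weightSum_add (g h : ℕ → R) (n : ℕ) :
    weightSum p q r (fun k => g k + h k) n = weightSum p q r g n + weightSum p q r h n := by
  simp only [weightSum, weight, mul_add, Finset.sum_add_distrib]

theorem weightSum_mul_const (g : ℕ → R) (a : R) (n : ℕ) :
    weightSum p q r (fun k => g k * a) n = weightSum p q r g n * a := by
  simp only [weightSum, weight, Finset.sum_mul, mul_assoc]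

theorem weightSum_pow_succ (y : R) {n : ℕ} (hn : n ≠ 0) :
    weightSum p q r (y ^ ·) (n + 1) =
      (r + p * y) * weightSum p q r (y ^ ·) n + q * weightSum p q r (fun k => (k : R)) n := by
  rw [weightSum_succ _ hn]
  simp only [pow_succ, weightSum_mul_const (y ^ ·), pow_zero]
  ring

theorem weightSum_natCast_succ {n : ℕ} (hn : n ≠ 0) :
    weightSum p q r (fun k => (k : R)) (n + 1) =
      (p + r) * weightSum p q r (fun k => (k : R)) n + p * weightSum p q r (fun _ => 1) n := by
  rw [weightSum_succ _ hn]
  simp only [Nat.cast_add, Nat.cast_one, Nat.cast_zero, weightSum_add]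
  ring

end Weights

section GeneratingFunctions

open PowerSeries

variable {R : Type*} [CommRing R] (p q r : R)

/-- The generating function of `weightSum p q r g` divided by `X` (there are no flattened Catalan
words of length `0`). -/
noncomputable def genFun (g : ℕ → R) : PowerSeries R :=
  mk fun n => weightSum p q r g (n + 1)

variable {p q r}

theorem one_sub_mul_genFun_pow (y : R) :
    (1 - C (r + p * y) * X) * genFun p q r (y ^ ·) =
      1 + C q * X * genFun p q r (fun k => (k : R)) := by
  rw [genFun, one_sub_C_mul_X_mul_mk fun n =>
      weightSum_pow_succ (n := n + 1) y n.add_one_ne_zero,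
    weightSum_one, pow_zero, map_one, genFun]

theorem one_sub_mul_genFun_natCast :
    (1 - C (p + r) * X) * genFun p q r (fun k => (k : R)) =
      C p * X * genFun p q r (fun _ => 1) := by
  rw [genFun, one_sub_C_mul_X_mul_mk fun n =>
      weightSum_natCast_succ (n := n + 1) n.add_one_ne_zero,
    weightSum_one, Nat.cast_zero, map_zero, zero_add, genFun]

end GeneratingFunctions

end FlattenedCatalan

open FlattenedCatalan PowerSeries

/-- The generating function for flattened Catalan words jointly by length,
ascents, descents, levels and `trun − 1` satisfies
`(1 − (r + p·y)x)(1 − 2(p+r)x + ((p+r)² − pq)x²)·A = x(1 − (p+r)x)²`. -/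
theorem genfun_asc_des_lev (p q r y : ℚ) (A : PowerSeries ℚ)
    (hA : ∀ n : ℕ, PowerSeries.coeff n A =
      if n = 0 then 0 else
        ∑ᶠ w ∈ FlatCat n, p ^ asc w * q ^ des w * r ^ lev w * y ^ (trun w - 1)) :
    (1 - PowerSeries.C (r + p * y) * PowerSeries.X) *
      (1 - PowerSeries.C (2 * (p + r)) * PowerSeries.X +
        PowerSeries.C ((p + r) ^ 2 - p * q) * PowerSeries.X ^ 2) * A =
    PowerSeries.X * (1 - PowerSeries.C (p + r) * PowerSeries.X) ^ 2 := by
  have hA' : A = X * genFun p q r (y ^ ·) := by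
    ext (_ | n)
    · simp [hA]
    · rw [hA, if_neg n.succ_ne_zero, coeff_succ_X_mul, genFun, coeff_mk, weightSum,
        finsum_mem_eq_finite_toFinset_sum _ (flatCat_finite _)]
      rfl
  have hF := one_sub_mul_genFun_pow (p := p) (q := q) (r := r) y
  have hF₁ := one_sub_mul_genFun_pow (p := p) (q := q) (r := r) 1
  have hT := one_sub_mul_genFun_natCast (p := p) (q := q) (r := r)
  simp only [one_pow, mul_one] at hF₁
  rw [hA']
  simp only [map_add, map_mul, map_sub, map_pow, map_ofNat] at hF hF₁ hT ⊢
  -- `hT` and `hF₁` give `((1 - (p + r) X) ^ 2 - p q X ^ 2) * genFun (↑·) = p X ^ 2`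
  linear_combination X * (((1 - (C p + C r) * X) ^ 2 - C p * C q * X ^ 2) * hF +
    C q * X * ((1 - (C p + C r) * X) * hT + C p * X * hF₁))
end

section
/- Fix p, q, r, y ∈ ℚ and let B ∈ ℚ[[x]] be the formal power series whose coefficient of x^n (n ≥ 1) is Σ_{π ∈ 𝓕_n} p^(#122(π)) · q^(#211(π)) · r^(#111(π)) · y^(trun(π)−1), and whose constant coefficient is 0. Then (1 − (r+y)·x − (p−r)·x²·y) · ((1 − (1+r)·x − (p−r)·x²)² − x²·(1 + (p−r)·x)·(1 + (q−r)·x)) · B = x·(1 + (1−r)·x)·(1 − (1+r)·x − (p−r)·x²)² as formal power series in ℚ[[x]]. -/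
/-!
A flattened Catalan word of length `n + 1 ≥ 2` arises in exactly one way by appending a letter
`a` to one of length `n`, where, writing `m` for the last letter and `ℓ` for the first letter of
the last run, `ℓ ≤ a ≤ m + 1`. Appending `m + 1` extends the last run by a new letter; appending
one of the `trun − 1` letters `a < m` starts a new run `a`; in both cases no pattern occurrence is
created. Appending `m` keeps `trun` and creates one occurrence of `122`, `111` or `211` according
as the previous step went up, stayed level or went down. Sorting words by their last step turns
this into a linear system for the series `W` (all words), `A` (weighted by `trun − 1`) and `B`,
and eliminating the states, then `W` and `A`, gives the identity.
-/

open scoped BigOperators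

namespace FlatCatalan

noncomputable def lastRunStart (w : List ℕ) : ℕ :=
  sInf {i | List.IsChain (· ≤ ·) (w.drop i)}

def lastLetter (w : List ℕ) : ℕ := w.getD (w.length - 1) 0

noncomputable def lastRunHead (w : List ℕ) : ℕ := w.getD (lastRunStart w) 0

theorem trun_eq_card_lastRunStart (w : List ℕ) :
    trun w = (w.drop (lastRunStart w)).toFinset.card := rfl

theorem isChain_of_length_le_one {α : Type*} {R : α → α → Prop} :
    ∀ {l : List α}, l.length ≤ 1 → List.IsChain R l
  | [], _ => List.isChain_nil
  | [a], _ => List.isChain_singleton a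

theorem chain_drop_length_sub_one (w : List ℕ) :
    List.IsChain (· ≤ ·) (w.drop (w.length - 1)) :=
  isChain_of_length_le_one (by simp; omega)

theorem lastRunStart_le (w : List ℕ) : lastRunStart w ≤ w.length - 1 :=
  Nat.sInf_le (chain_drop_length_sub_one w)

theorem lastRunStart_lt {w : List ℕ} (hw : w ≠ []) : lastRunStart w < w.length := by
  have := lastRunStart_le w
  have := List.length_pos_iff.2 hw
  omega

theorem chain_drop_lastRunStart (w : List ℕ) :
    List.IsChain (· ≤ ·) (w.drop (lastRunStart w)) :=
  Nat.sInf_mem (s := {i | List.IsChain (· ≤ ·) (w.drop i)}) ⟨_, chain_drop_length_sub_one w⟩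

theorem getD_le_getD_of_lastRunStart_le {w : List ℕ} {i j : ℕ} (hi : lastRunStart w ≤ i)
    (hij : i ≤ j) (hj : j < w.length) : w.getD i 0 ≤ w.getD j 0 := by
  obtain rfl | hij := hij.eq_or_lt
  · rfl
  have hsorted := List.pairwise_iff_getElem.1
    (List.isChain_iff_pairwise.1 (chain_drop_lastRunStart w)) (i - lastRunStart w)
    (j - lastRunStart w) (by simp; omega) (by simp; omega) (by omega)
  simp only [List.getElem_drop] at hsorted
  rw [← List.getD_eq_getElem w 0, ← List.getD_eq_getElem w 0] at hsorted
  rwa [Nat.add_sub_cancel' hi, Nat.add_sub_cancel' (hi.trans hij.le)] at hsorted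

theorem lastRunHead_le_lastLetter {w : List ℕ} (hw : w ≠ []) :
    lastRunHead w ≤ lastLetter w :=
  getD_le_getD_of_lastRunStart_le le_rfl (lastRunStart_le w)
    (by have := List.length_pos_iff.2 hw; omega)

theorem runStart_lastRunStart {w : List ℕ} (hw : w ≠ []) : RunStart w (lastRunStart w) := by
  set k := lastRunStart w with hk
  have hkw : k < w.length := lastRunStart_lt hw
  refine ⟨hkw, or_iff_not_imp_left.2 fun hk0 => Nat.lt_of_not_le fun hle => ?_⟩
  -- otherwise the suffix starting one letter earlier is still weakly increasing
  have hdrop : w.drop (k - 1) = w[k - 1] :: w[k] :: w.drop (k + 1) := by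
    rw [List.drop_eq_getElem_cons (by omega), Nat.sub_add_cancel (by omega),
      List.drop_eq_getElem_cons hkw]
  have hchain : List.IsChain (· ≤ ·) (w.drop (k - 1)) := by
    have hrest := chain_drop_lastRunStart w
    rw [← hk, List.drop_eq_getElem_cons hkw] at hrest
    rw [hdrop, List.isChain_cons_cons]
    refine ⟨?_, hrest⟩
    rwa [List.getD_eq_getElem _ _ hkw, List.getD_eq_getElem _ _ (by omega)] at hle
  have : k ≤ k - 1 := Nat.sInf_le hchain
  omega

theorem le_lastRunStart_of_runStart {w : List ℕ} {i : ℕ} (h : RunStart w i) :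
    i ≤ lastRunStart w := by
  by_contra! hlt
  obtain ⟨hiw, h0 | hdesc⟩ := h
  · omega
  · have := getD_le_getD_of_lastRunStart_le (w := w) (i := i - 1) (j := i) (by omega)
      (by omega) hiw
    omega

theorem runStart_getD_le_lastRunHead {w : List ℕ} (hf : IsFlattened w) (hw : w ≠ []) {i : ℕ}
    (h : RunStart w i) : w.getD i 0 ≤ lastRunHead w :=
  hf i _ h (runStart_lastRunStart hw) (le_lastRunStart_of_runStart h)

theorem toFinset_drop_lastRunStart {w : List ℕ} (hcat : IsCatalan w) :
    (w.drop (lastRunStart w)).toFinset = Finset.Icc (lastRunHead w) (lastLetter w) := by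
  set k := lastRunStart w
  have hk : k < w.length := lastRunStart_lt hcat.1
  ext x
  simp only [List.mem_toFinset, Finset.mem_Icc, List.mem_iff_getElem, List.length_drop,
    List.getElem_drop]
  constructor
  · rintro ⟨i, hi, rfl⟩
    rw [← List.getD_eq_getElem _ 0]
    exact ⟨getD_le_getD_of_lastRunStart_le le_rfl (by omega) (by omega),
      getD_le_getD_of_lastRunStart_le (by omega) (by omega) (by omega)⟩
  · rintro ⟨hlo, hhi⟩
    -- the letters of the last run climb by steps of at most one, so they fill the interval
    suffices ∀ j, k ≤ j → j < w.length → x ≤ w.getD j 0 → ∃ i, k ≤ i ∧ i ≤ j ∧ w.getD i 0 = x by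
      obtain ⟨i, hki, hij, hix⟩ := this _ (lastRunStart_le w) (by omega) hhi
      refine ⟨i - k, by omega, ?_⟩
      simp only [← hix, List.getD_eq_getElem _ _ (show i < w.length by omega),
        Nat.add_sub_cancel' hki]
    intro j hkj
    induction j, hkj using Nat.le_induction with
    | base => exact fun _ hx => ⟨k, le_rfl, le_rfl, le_antisymm hlo hx⟩
    | succ j hkj ih =>
      intro hj hx
      by_cases hxj : x ≤ w.getD j 0
      · obtain ⟨i, hki, hij, hix⟩ := ih (by omega) hxj
        exact ⟨i, hki, by omega, hix⟩
      · exact ⟨j + 1, by omega, le_rfl, by have := (hcat.2.2 j hj).2; omega⟩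

theorem trun_eq {w : List ℕ} (hcat : IsCatalan w) :
    trun w = lastLetter w + 1 - lastRunHead w := by
  rw [trun_eq_card_lastRunStart, toFinset_drop_lastRunStart hcat, Nat.card_Icc]

theorem one_le_getD {w : List ℕ} (hcat : IsCatalan w) {i : ℕ} (hi : i < w.length) :
    1 ≤ w.getD i 0 := by
  cases i with
  | zero => rw [hcat.2.1]
  | succ k => exact (hcat.2.2 k hi).1

theorem getLast?_eq_some_lastLetter {w : List ℕ} (hw : w ≠ []) :
    w.getLast? = some (lastLetter w) := by
  rw [List.getLast?_eq_getElem?, lastLetter, List.getD_eq_getElem?_getD,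
    List.getElem?_eq_getElem (by have := List.length_pos_iff.2 hw; omega)]
  rfl

theorem getD_append_length (w : List ℕ) (a : ℕ) : (w ++ [a]).getD w.length 0 = a := by
  simp

theorem lastLetter_append (w : List ℕ) (a : ℕ) : lastLetter (w ++ [a]) = a := by
  simp [lastLetter]

theorem isChain_drop_append_iff {w : List ℕ} {a : ℕ} (hw : w ≠ []) (ha : lastLetter w ≤ a)
    (i : ℕ) : List.IsChain (· ≤ ·) ((w ++ [a]).drop i) ↔ List.IsChain (· ≤ ·) (w.drop i) := by
  rw [List.drop_append]
  by_cases hi : i < w.length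
  · rw [Nat.sub_eq_zero_of_le hi.le, List.drop_zero, List.isChain_append, List.getLast?_drop,
      if_neg (by omega), getLast?_eq_some_lastLetter hw]
    simpa using fun _ => ha
  · rw [List.drop_eq_nil_of_le (by omega), List.nil_append]
    exact iff_of_true (isChain_of_length_le_one (by simp)) List.isChain_nil

theorem lastRunStart_append_of_le {w : List ℕ} {a : ℕ} (hw : w ≠ []) (ha : lastLetter w ≤ a) :
    lastRunStart (w ++ [a]) = lastRunStart w := by
  simp only [lastRunStart, isChain_drop_append_iff hw ha]

theorem runStart_append_length_iff {w : List ℕ} {a : ℕ} (hw : w ≠ []) :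
    RunStart (w ++ [a]) w.length ↔ a < lastLetter w := by
  have hw0 : 0 < w.length := List.length_pos_iff.2 hw
  rw [RunStart, getD_append_length, List.getD_append _ _ _ _ (by omega), List.length_append]
  exact ⟨fun ⟨_, h⟩ => h.resolve_left hw0.ne', fun h => ⟨by simp, Or.inr h⟩⟩

theorem runStart_append_iff_of_lt {w : List ℕ} {a i : ℕ} (hi : i < w.length) :
    RunStart (w ++ [a]) i ↔ RunStart w i := by
  simp only [RunStart, List.length_append, List.length_singleton, List.getD_append _ _ _ _ hi,
    List.getD_append _ _ _ _ (show i - 1 < w.length by omega)]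
  exact and_congr_left fun _ => iff_of_true (by omega) hi

theorem lastRunStart_append_of_lt {w : List ℕ} {a : ℕ} (hw : w ≠ []) (ha : a < lastLetter w) :
    lastRunStart (w ++ [a]) = w.length :=
  le_antisymm (by simpa using lastRunStart_le (w ++ [a]))
    (le_lastRunStart_of_runStart ((runStart_append_length_iff hw).2 ha))

theorem toFinset_drop_lastRunStart_append {w : List ℕ} {a : ℕ} (hcat : IsCatalan w)
    (ha : lastLetter w ≤ a) :
    ((w ++ [a]).drop (lastRunStart (w ++ [a]))).toFinset =
      insert a (Finset.Icc (lastRunHead w) (lastLetter w)) := by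
  rw [lastRunStart_append_of_le hcat.1 ha, List.drop_append,
    Nat.sub_eq_zero_of_le (lastRunStart_lt hcat.1).le, List.drop_zero, List.toFinset_append,
    toFinset_drop_lastRunStart hcat, Finset.union_comm]
  rfl

theorem trun_append_lastLetter {w : List ℕ} (hcat : IsCatalan w) :
    trun (w ++ [lastLetter w]) = trun w := by
  rw [trun_eq_card_lastRunStart, toFinset_drop_lastRunStart_append hcat le_rfl,
    Finset.insert_eq_of_mem (Finset.mem_Icc.2 ⟨lastRunHead_le_lastLetter hcat.1, le_rfl⟩),
    ← toFinset_drop_lastRunStart hcat, trun_eq_card_lastRunStart]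

theorem trun_append_lastLetter_add_one {w : List ℕ} (hcat : IsCatalan w) :
    trun (w ++ [lastLetter w + 1]) = trun w + 1 := by
  rw [trun_eq_card_lastRunStart, toFinset_drop_lastRunStart_append hcat (by omega),
    Finset.card_insert_of_notMem (by simp), trun_eq_card_lastRunStart,
    toFinset_drop_lastRunStart hcat]

theorem trun_append_of_lt {w : List ℕ} {a : ℕ} (hw : w ≠ []) (ha : a < lastLetter w) :
    trun (w ++ [a]) = 1 := by
  rw [trun_eq_card_lastRunStart, lastRunStart_append_of_lt hw ha, List.drop_left']
  · rfl
  · rfl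

theorem isCatalan_append_iff {w : List ℕ} {a : ℕ} (hw : w ≠ []) :
    IsCatalan (w ++ [a]) ↔ IsCatalan w ∧ 1 ≤ a ∧ a ≤ lastLetter w + 1 := by
  have hw0 : 0 < w.length := List.length_pos_iff.2 hw
  have hlast : lastLetter w = (w ++ [a]).getD (w.length - 1) 0 :=
    (List.getD_append _ _ _ _ (by omega)).symm
  have hstep : ∀ i, i + 1 < w.length →
      ((w ++ [a]).getD (i + 1) 0 = w.getD (i + 1) 0 ∧ (w ++ [a]).getD i 0 = w.getD i 0) :=
    fun i hi => ⟨List.getD_append _ _ _ _ hi, List.getD_append _ _ _ _ (by omega)⟩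
  rw [IsCatalan, IsCatalan, List.getD_append _ _ _ _ hw0, List.length_append,
    List.length_singleton]
  constructor
  · rintro ⟨-, h0, hsteps⟩
    refine ⟨⟨hw, h0, fun i hi => ?_⟩, ?_⟩
    · rw [← (hstep i hi).1, ← (hstep i hi).2]
      exact hsteps i (by omega)
    · have := hsteps (w.length - 1) (by omega)
      rwa [Nat.sub_add_cancel hw0, getD_append_length, ← hlast] at this
  · rintro ⟨⟨-, h0, hsteps⟩, ha⟩
    refine ⟨by simp, h0, fun i hi => ?_⟩
    rcases Nat.lt_or_ge (i + 1) w.length with hi' | hi'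
    · rw [(hstep i hi').1, (hstep i hi').2]
      exact hsteps i hi'
    · obtain rfl : i = w.length - 1 := by omega
      rwa [Nat.sub_add_cancel hw0, getD_append_length, ← hlast]

theorem isFlattened_append_iff {w : List ℕ} {a : ℕ} (hw : w ≠ []) :
    IsFlattened (w ++ [a]) ↔ IsFlattened w ∧ (a < lastLetter w → lastRunHead w ≤ a) := by
  have hlast := lastRunStart_lt hw
  constructor
  · intro hf
    refine ⟨fun i j hi hj hij => ?_, fun ha => ?_⟩
    · have hiw : i < w.length := lt_of_le_of_lt hij hj.1
      have := hf i j ((runStart_append_iff_of_lt hiw).2 hi)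
        ((runStart_append_iff_of_lt hj.1).2 hj) hij
      rwa [List.getD_append _ _ _ _ hiw, List.getD_append _ _ _ _ hj.1] at this
    · have := hf _ _ ((runStart_append_iff_of_lt hlast).2 (runStart_lastRunStart hw))
        ((runStart_append_length_iff hw).2 ha) hlast.le
      rwa [List.getD_append _ _ _ _ hlast, getD_append_length] at this
  · rintro ⟨hf, hhead⟩ i j hi hj hij
    have hj' : j < w.length + 1 := by simpa using hj.1
    rcases Nat.lt_or_ge j w.length with hjw | hjw
    · rw [List.getD_append _ _ _ _ (by omega), List.getD_append _ _ _ _ hjw]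
      exact hf i j ((runStart_append_iff_of_lt (by omega)).1 hi)
        ((runStart_append_iff_of_lt hjw).1 hj) hij
    obtain rfl : j = w.length := by omega
    rcases Nat.lt_or_ge i w.length with hiw | hiw
    · rw [List.getD_append _ _ _ _ hiw, getD_append_length]
      exact (runStart_getD_le_lastRunHead hf hw ((runStart_append_iff_of_lt hiw).1 hi)).trans
        (hhead ((runStart_append_length_iff hw).1 hj))
    · obtain rfl : i = w.length := by omega
      rfl

theorem append_mem_flatCat_iff {w : List ℕ} {a n : ℕ} (hw : w ≠ []) :
    w ++ [a] ∈ FlatCat (n + 1) ↔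
      w ∈ FlatCat n ∧ lastRunHead w ≤ a ∧ a ≤ lastLetter w + 1 := by
  simp only [FlatCat, Set.mem_ofPred_eq, List.length_append, List.length_singleton,
    Nat.add_right_cancel_iff, isCatalan_append_iff hw, isFlattened_append_iff hw]
  constructor
  · rintro ⟨hn, ⟨hcat, h1, ha⟩, hf, hhead⟩
    refine ⟨⟨hn, hcat, hf⟩, ?_, ha⟩
    by_contra! hlt
    have := lastRunHead_le_lastLetter hw
    exact absurd (hhead (by omega)) (by omega)
  · rintro ⟨⟨hn, hcat, hf⟩, hhead, ha⟩
    have := one_le_getD hcat (lastRunStart_lt hw)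
    exact ⟨hn, ⟨hcat, by unfold lastRunHead at hhead; omega, ha⟩, hf, fun _ => hhead⟩

theorem getD_le_add_one {w : List ℕ} (hcat : IsCatalan w) {i : ℕ} (hi : i < w.length) :
    w.getD i 0 ≤ i + 1 := by
  induction i with
  | zero => rw [hcat.2.1]
  | succ k ih => have := (hcat.2.2 k hi).2; have := ih (by omega); omega

theorem flatCat_finite (n : ℕ) : (FlatCat n).Finite := by
  refine (Set.finite_range fun f : Fin n → Fin (n + 1) => List.ofFn fun i => (f i : ℕ)).subset ?_
  rintro w ⟨rfl, hcat, -⟩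
  refine ⟨fun i => ⟨w.getD i 0, by have := getD_le_add_one hcat i.2; omega⟩, ?_⟩
  exact List.ext_getElem (by simp) fun i _ _ => by simp

noncomputable def flatCatFinset (n : ℕ) : Finset (List ℕ) := (flatCat_finite n).toFinset

theorem mem_flatCatFinset {n : ℕ} {w : List ℕ} : w ∈ flatCatFinset n ↔ w ∈ FlatCat n :=
  Set.Finite.mem_toFinset _

theorem flatCatFinset_zero : flatCatFinset 0 = ∅ :=
  Finset.eq_empty_of_forall_notMem fun _ hw =>
    (mem_flatCatFinset.1 hw).2.1.1 (List.length_eq_zero_iff.1 (mem_flatCatFinset.1 hw).1)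

theorem flatCatFinset_one : flatCatFinset 1 = {[1]} := by
  ext w
  rw [mem_flatCatFinset, Finset.mem_singleton]
  constructor
  · rintro ⟨hlen, hcat, -⟩
    obtain ⟨x, rfl⟩ := List.length_eq_one_iff.1 hlen
    simpa using hcat.2.1
  · rintro rfl
    refine ⟨rfl, ⟨by simp, rfl, fun i hi => by simp at hi⟩, fun i j hi hj _ => ?_⟩
    obtain rfl : i = 0 := by simpa using hi.1
    obtain rfl : j = 0 := by simpa using hj.1
    rfl

theorem flatCatFinset_succ {n : ℕ} (hn : 1 ≤ n) :
    flatCatFinset (n + 1) = (flatCatFinset n).biUnion fun w =>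
      (Finset.Icc (lastRunHead w) (lastLetter w + 1)).image fun a => w ++ [a] := by
  ext v
  simp only [Finset.mem_biUnion, Finset.mem_image, Finset.mem_Icc, mem_flatCatFinset]
  constructor
  · intro hv
    have hv0 : v ≠ [] := hv.2.1.1
    have hw : v.dropLast ≠ [] := by
      rw [← List.length_pos_iff, List.length_dropLast, hv.1]
      omega
    rw [← List.dropLast_append_getLast hv0] at hv ⊢
    exact ⟨_, ((append_mem_flatCat_iff hw).1 hv).1, _, ((append_mem_flatCat_iff hw).1 hv).2, rfl⟩
  · rintro ⟨w, hw, a, ha, rfl⟩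
    have hw0 : w ≠ [] := hw.2.1.1
    exact (append_mem_flatCat_iff hw0).2 ⟨hw, ha⟩

theorem sum_flatCatFinset_succ {n : ℕ} (hn : 1 ≤ n) (g : List ℕ → ℚ) :
    ∑ v ∈ flatCatFinset (n + 1), g v =
      ∑ w ∈ flatCatFinset n, ∑ a ∈ Finset.Icc (lastRunHead w) (lastLetter w + 1), g (w ++ [a]) := by
  rw [flatCatFinset_succ hn, Finset.sum_biUnion]
  · refine Finset.sum_congr rfl fun w _ => Finset.sum_image fun a _ b _ hab => ?_
    simpa using hab
  · intro w₁ _ w₂ _ hne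
    refine Finset.disjoint_left.2 fun v hv₁ hv₂ => hne ?_
    obtain ⟨a₁, -, rfl⟩ := Finset.mem_image.1 hv₁
    obtain ⟨a₂, -, h⟩ := Finset.mem_image.1 hv₂
    simpa using (congrArg List.dropLast h).symm

theorem numOcc_eq_zero_of_length_lt {τ w : List ℕ} (h : w.length < τ.length) :
    numOcc τ w = 0 := by
  rw [numOcc, Set.ncard_eq_zero (Set.finite_empty.subset fun i hi => by have := hi.1; omega)]
  exact Set.eq_empty_of_forall_notMem fun i hi => by have := hi.1; omega

theorem occAt_append_iff_of_le {τ w : List ℕ} {a i : ℕ} (h : i + τ.length ≤ w.length) :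
    OccAt τ (w ++ [a]) i ↔ OccAt τ w i := by
  have hget : ∀ s < τ.length, (w ++ [a]).getD (i + s) 0 = w.getD (i + s) 0 :=
    fun s hs => List.getD_append _ _ _ _ (by omega)
  simp only [OccAt, List.length_append, List.length_singleton]
  refine and_congr (iff_of_true (by omega) h) (forall₂_congr fun s hs => forall₂_congr
    fun t ht => ?_)
  rw [hget s hs, hget t ht]

open Classical in
theorem numOcc_append {τ w : List ℕ} (hτ : τ ≠ []) (a : ℕ) :
    numOcc τ (w ++ [a]) =
      numOcc τ w + if OccAt τ (w ++ [a]) (w.length + 1 - τ.length) then 1 else 0 := by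
  have hτ0 := List.length_pos_iff.2 hτ
  have hfin : {i | OccAt τ w i}.Finite := (Set.finite_Iio w.length).subset fun i hi => by
    have := hi.1; simp only [Set.mem_Iio]; omega
  have hocc : ∀ i, OccAt τ (w ++ [a]) i ↔
      OccAt τ w i ∨ (i = w.length + 1 - τ.length ∧ OccAt τ (w ++ [a]) i) := by
    intro i
    by_cases hi : i + τ.length ≤ w.length
    · rw [occAt_append_iff_of_le hi]
      exact ⟨Or.inl, fun h => h.elim id And.right⟩
    · refine ⟨fun h => Or.inr ⟨?_, h⟩, fun h => h.elim (fun h => absurd h.1 hi) And.right⟩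
      have := h.1
      simp only [List.length_append, List.length_singleton] at this
      omega
  unfold numOcc
  split_ifs with hlast
  · have hnew : w.length + 1 - τ.length ∉ {i | OccAt τ w i} := fun h => by have := h.1; omega
    rw [← Set.ncard_insert_of_notMem hnew hfin]
    congr 1
    ext i
    rw [Set.mem_insert_iff, Set.mem_ofPred_eq, Set.mem_ofPred_eq, hocc]
    constructor
    · rintro (h | ⟨rfl, -⟩)
      exacts [Or.inr h, Or.inl rfl]
    · rintro (rfl | h)
      exacts [Or.inr ⟨rfl, hlast⟩, Or.inl h]
  · congr 1
    ext i
    rw [Set.mem_ofPred_eq, Set.mem_ofPred_eq, hocc]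
    exact or_iff_left fun h => hlast (h.1 ▸ h.2)

theorem occAt_pair_iff {w : List ℕ} {i : ℕ} (x y : ℕ) :
    OccAt [x, y, y] w i ↔ i + 3 ≤ w.length ∧ (w.getD i 0 < w.getD (i + 1) 0 ↔ x < y) ∧
      (w.getD (i + 1) 0 < w.getD i 0 ↔ y < x) ∧ w.getD (i + 1) 0 = w.getD (i + 2) 0 := by
  simp only [OccAt, List.length_cons, List.length_nil]
  refine and_congr_right fun _ => ⟨fun h => ⟨?_, ?_, ?_⟩, fun ⟨h01, h10, h12⟩ s hs t ht => ?_⟩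
  · simpa using h 0 (by omega) 1 (by omega)
  · simpa using h 1 (by omega) 0 (by omega)
  · have h12 := h 1 (by omega) 2 (by omega)
    have h21 := h 2 (by omega) 1 (by omega)
    simp only [List.getD_cons_succ, List.getD_cons_zero, lt_self_iff_false, iff_false] at h12 h21
    omega
  · interval_cases s <;> interval_cases t <;>
      simp only [List.getD_cons_succ, List.getD_cons_zero, Nat.add_zero] <;> omega

inductive StepKind
  | initial
  | up
  | flat
  | down
  deriving DecidableEq

def StepKind.of (u v : ℕ) : StepKind :=
  if u < v then .up else if u = v then .flat else .down

def lastStep (w : List ℕ) : StepKind :=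
  if w.length ≤ 1 then .initial else StepKind.of (w.getD (w.length - 2) 0) (lastLetter w)

theorem lastStep_append {w : List ℕ} (hw : w ≠ []) (a : ℕ) :
    lastStep (w ++ [a]) = StepKind.of (lastLetter w) a := by
  have hw0 : 0 < w.length := List.length_pos_iff.2 hw
  rw [lastStep, if_neg (by simp; omega), lastLetter_append, List.length_append,
    List.length_singleton, show w.length + 1 - 2 = w.length - 1 by omega,
    List.getD_append _ _ _ _ (by omega)]
  rfl

/-- Repeating the last letter completes an occurrence of `122`, `111` or `211` according as the
last step went up, stayed level or went down. -/
def StepKind.flatFactor (p q r : ℚ) : StepKind → ℚ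
  | initial => 1
  | up => p
  | flat => r
  | down => q

noncomputable def weight (p q r : ℚ) (w : List ℕ) : ℚ :=
  p ^ numOcc [1, 2, 2] w * q ^ numOcc [2, 1, 1] w * r ^ numOcc [1, 1, 1] w

theorem weight_of_length_le_two {w : List ℕ} (h : w.length ≤ 2) (p q r : ℚ) :
    weight p q r w = 1 := by
  have hshort : ∀ x y z : ℕ, numOcc [x, y, z] w = 0 :=
    fun _ _ _ => numOcc_eq_zero_of_length_lt (by simp; omega)
  simp [weight, hshort]

theorem numOcc_pair_append {w : List ℕ} (hw : 2 ≤ w.length) (x y a : ℕ) :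
    numOcc [x, y, y] (w ++ [a]) = numOcc [x, y, y] w +
      if (w.getD (w.length - 2) 0 < lastLetter w ↔ x < y) ∧
        (lastLetter w < w.getD (w.length - 2) 0 ↔ y < x) ∧ lastLetter w = a then 1 else 0 := by
  classical
  rw [numOcc_append (List.cons_ne_nil _ _)]
  congr 1
  refine if_congr ?_ rfl rfl
  rw [occAt_pair_iff, List.length_cons, List.length_cons, List.length_singleton,
    show w.length + 1 - (0 + 1 + 1 + 1) = w.length - 2 by omega,
    show w.length - 2 + 1 = w.length - 1 by omega, show w.length - 2 + 2 = w.length by omega,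
    List.getD_append _ _ _ _ (by omega), List.getD_append _ _ _ _ (by omega),
    getD_append_length, List.length_append, List.length_singleton]
  exact and_iff_right (by omega)

theorem weight_append (w : List ℕ) (p q r : ℚ) (a : ℕ) :
    weight p q r (w ++ [a]) =
      (if a = lastLetter w then (lastStep w).flatFactor p q r else 1) * weight p q r w := by
  rcases Nat.lt_or_ge w.length 2 with hw1 | hw2
  · have hinit : lastStep w = .initial := if_pos (by omega)
    rw [weight_of_length_le_two (by simp; omega), weight_of_length_le_two (by omega), hinit]
    simp [StepKind.flatFactor]
  simp only [weight, numOcc_pair_append hw2, pow_add]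
  set u := w.getD (w.length - 2) 0
  have hstep : lastStep w = StepKind.of u (lastLetter w) := if_neg (by omega)
  rw [hstep]
  by_cases ha : a = lastLetter w
  · subst ha
    rcases lt_trichotomy u (lastLetter w) with h | h | h
    · simp [StepKind.of, StepKind.flatFactor, h, h.not_gt, mul_comm, mul_left_comm]
    · simp [StepKind.of, StepKind.flatFactor, h, mul_comm, mul_assoc]
    · simp [StepKind.of, StepKind.flatFactor, h, h.ne', h.not_gt, mul_comm, mul_assoc, mul_left_comm]
  · simp [Ne.symm ha, ha]

theorem one_le_trun {w : List ℕ} (hcat : IsCatalan w) : 1 ≤ trun w := by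
  rw [trun_eq hcat]
  have := lastRunHead_le_lastLetter hcat.1
  omega

theorem trun_singleton (a : ℕ) : trun [a] = 1 := by
  rw [trun_eq_card_lastRunStart, Nat.eq_zero_of_le_zero (lastRunStart_le [a])]
  rfl

theorem sum_Icc_add_one_eq {M : Type*} [AddCommMonoid M] {lo m : ℕ} (hlo : lo ≤ m)
    (g : ℕ → M) :
    ∑ a ∈ Finset.Icc lo (m + 1), g a = ∑ a ∈ Finset.Ico lo m, g a + g m + g (m + 1) := by
  rw [← Finset.Ico_add_one_right_eq_Icc, Finset.sum_Ico_succ_top (by omega),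
    Finset.sum_Ico_succ_top hlo]

theorem sum_eq_sum_filter_lastStep {M : Type*} [AddCommMonoid M] (S : Finset (List ℕ))
    (g : List ℕ → M) :
    ∑ w ∈ S, g w =
      ∑ w ∈ S with lastStep w = .initial, g w + ∑ w ∈ S with lastStep w = .up, g w +
        ∑ w ∈ S with lastStep w = .flat, g w + ∑ w ∈ S with lastStep w = .down, g w := by
  simp only [Finset.sum_filter, ← Finset.sum_add_distrib]
  refine Finset.sum_congr rfl fun w _ => ?_
  cases lastStep w <;> simp

section StateSums

variable (p q r : ℚ) (f : ℕ → ℚ)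

/-- `f` weighs a word by `trun − 1`: `f = 1`, `f k = k` and `f k = y ^ k` give the three series
of the proof. -/
noncomputable def weightSum (n : ℕ) : ℚ :=
  ∑ w ∈ flatCatFinset n, weight p q r w * f (trun w - 1)

noncomputable def stateSum (s : StepKind) (n : ℕ) : ℚ :=
  ∑ w ∈ flatCatFinset n with lastStep w = s, weight p q r w * f (trun w - 1)

theorem weightSum_zero : weightSum p q r f 0 = 0 := by
  simp [weightSum, flatCatFinset_zero]

theorem stateSum_zero (s : StepKind) : stateSum p q r f s 0 = 0 := by
  simp [stateSum, flatCatFinset_zero]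

theorem stateSum_one (s : StepKind) :
    stateSum p q r f s 1 = if s = .initial then f 0 else 0 := by
  have hinit : lastStep [1] = .initial := rfl
  rw [stateSum, flatCatFinset_one, Finset.filter_singleton, hinit]
  cases s <;> simp [weight_of_length_le_two, trun_singleton]

theorem weightSum_eq_sum_stateSum (n : ℕ) :
    weightSum p q r f n = stateSum p q r f .initial n + stateSum p q r f .up n +
      stateSum p q r f .flat n + stateSum p q r f .down n :=
  sum_eq_sum_filter_lastStep _ _

theorem sum_append_filter_lastStep {w : List ℕ} (hcat : IsCatalan w) (s : StepKind) :
    ∑ a ∈ Finset.Icc (lastRunHead w) (lastLetter w + 1),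
        (if lastStep (w ++ [a]) = s then weight p q r (w ++ [a]) * f (trun (w ++ [a]) - 1)
          else 0) =
      (if s = .down then ((trun w - 1 : ℕ) : ℚ) * (weight p q r w * f 0) else 0) +
      (if s = .flat then (lastStep w).flatFactor p q r * (weight p q r w * f (trun w - 1))
        else 0) +
      (if s = .up then weight p q r w * f (trun w) else 0) := by
  have hw := hcat.1
  have hlo := lastRunHead_le_lastLetter hw
  have hdown : ∀ a ∈ Finset.Ico (lastRunHead w) (lastLetter w),
      (if lastStep (w ++ [a]) = s then weight p q r (w ++ [a]) * f (trun (w ++ [a]) - 1)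
        else 0) = if s = .down then weight p q r w * f 0 else 0 := by
    intro a ha
    have ha : a < lastLetter w := (Finset.mem_Ico.1 ha).2
    simp [lastStep_append hw, weight_append, trun_append_of_lt hw ha, StepKind.of, ha.not_gt,
      ha.ne, ha.ne', eq_comm]
  rw [sum_Icc_add_one_eq hlo, Finset.sum_congr rfl hdown, Finset.sum_const, Nat.card_Ico,
    show lastLetter w - lastRunHead w = trun w - 1 by rw [trun_eq hcat]; omega,
    lastStep_append hw, lastStep_append hw, weight_append, weight_append,
    trun_append_lastLetter hcat, trun_append_lastLetter_add_one hcat]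
  cases s <;> simp [StepKind.of, mul_assoc]

theorem stateSum_succ {n : ℕ} (hn : 1 ≤ n) (s : StepKind) :
    stateSum p q r f s (n + 1) = ∑ w ∈ flatCatFinset n,
      ((if s = .down then ((trun w - 1 : ℕ) : ℚ) * (weight p q r w * f 0) else 0) +
      (if s = .flat then (lastStep w).flatFactor p q r * (weight p q r w * f (trun w - 1))
        else 0) +
      (if s = .up then weight p q r w * f (trun w) else 0)) := by
  rw [stateSum, Finset.sum_filter, sum_flatCatFinset_succ hn]
  exact Finset.sum_congr rfl fun w hw =>
    sum_append_filter_lastStep p q r f (mem_flatCatFinset.1 hw).2.1 s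

theorem stateSum_initial_succ {n : ℕ} (hn : 1 ≤ n) :
    stateSum p q r f .initial (n + 1) = 0 := by
  simp [stateSum_succ p q r f hn]

theorem stateSum_up_succ (n : ℕ) :
    stateSum p q r f .up (n + 1) = weightSum p q r (fun k => f (k + 1)) n := by
  rcases Nat.eq_zero_or_pos n with rfl | hn
  · simp [stateSum_one, weightSum_zero]
  rw [stateSum_succ p q r f hn]
  refine Finset.sum_congr rfl fun w hw => ?_
  have := one_le_trun (mem_flatCatFinset.1 hw).2.1
  simp [Nat.sub_add_cancel this]

theorem stateSum_flat_succ (n : ℕ) :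
    stateSum p q r f .flat (n + 1) = stateSum p q r f .initial n + p * stateSum p q r f .up n +
      r * stateSum p q r f .flat n + q * stateSum p q r f .down n := by
  rcases Nat.eq_zero_or_pos n with rfl | hn
  · simp [stateSum_one, stateSum_zero]
  have hfilter : ∀ s, ∑ w ∈ flatCatFinset n with lastStep w = s,
      (lastStep w).flatFactor p q r * (weight p q r w * f (trun w - 1)) =
        s.flatFactor p q r * stateSum p q r f s n := fun s => by
    rw [stateSum, Finset.mul_sum]
    exact Finset.sum_congr rfl fun w hw => by rw [(Finset.mem_filter.1 hw).2]
  simp only [stateSum_succ p q r f hn, reduceCtorEq, if_false, if_true, zero_add, add_zero]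
  rw [sum_eq_sum_filter_lastStep, hfilter, hfilter, hfilter, hfilter]
  simp only [StepKind.flatFactor, one_mul]

theorem stateSum_down_succ (n : ℕ) :
    stateSum p q r f .down (n + 1) = f 0 * weightSum p q r (fun k => (k : ℚ)) n := by
  rcases Nat.eq_zero_or_pos n with rfl | hn
  · simp [stateSum_one, weightSum_zero]
  simp only [stateSum_succ p q r f hn, weightSum, Finset.mul_sum]
  refine Finset.sum_congr rfl fun w _ => ?_
  simp only [if_true, reduceCtorEq, if_false, add_zero]
  ring

end StateSums

open PowerSeries

theorem mk_eq_X_mul_mk {R : Type*} [Semiring R] {a b : ℕ → R} (h0 : a 0 = 0)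
    (h : ∀ n, a (n + 1) = b n) : mk a = X * mk b := by
  ext (_ | n)
  · simp [h0]
  · rw [coeff_succ_X_mul, coeff_mk, coeff_mk, h]

section Series

variable (p q r : ℚ) (f : ℕ → ℚ)

noncomputable def weightSeries : ℚ⟦X⟧ := mk (weightSum p q r f)

noncomputable def stateSeries (s : StepKind) : ℚ⟦X⟧ := mk (stateSum p q r f s)

theorem weightSeries_add (g : ℕ → ℚ) :
    weightSeries p q r (fun k => f k + g k) = weightSeries p q r f + weightSeries p q r g := by
  ext n
  simp [weightSeries, weightSum, mul_add, Finset.sum_add_distrib]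

theorem weightSum_const_mul (c : ℚ) (n : ℕ) :
    weightSum p q r (fun k => c * f k) n = c * weightSum p q r f n := by
  simp [weightSum, Finset.mul_sum, mul_left_comm]

theorem weightSeries_const_mul (c : ℚ) :
    weightSeries p q r (fun k => c * f k) = C c * weightSeries p q r f := by
  ext n
  simp [weightSeries, weightSum_const_mul]

theorem weightSeries_eq_sum_stateSeries :
    weightSeries p q r f = stateSeries p q r f .initial + stateSeries p q r f .up +
      stateSeries p q r f .flat + stateSeries p q r f .down := by
  ext n
  simp [weightSeries, stateSeries, weightSum_eq_sum_stateSum]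

theorem stateSeries_initial : stateSeries p q r f .initial = C (f 0) * X := by
  ext (_ | _ | n)
  · simp [stateSeries, stateSum_zero]
  · simp [stateSeries, stateSum_one]
  · simp [stateSeries, stateSum_initial_succ p q r f (Nat.le_add_left 1 n)]

theorem stateSeries_up :
    stateSeries p q r f .up = X * weightSeries p q r (fun k => f (k + 1)) :=
  mk_eq_X_mul_mk (stateSum_zero p q r f _) (stateSum_up_succ p q r f)

theorem stateSeries_flat :
    stateSeries p q r f .flat = X * (stateSeries p q r f .initial +
      C p * stateSeries p q r f .up + C r * stateSeries p q r f .flat +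
        C q * stateSeries p q r f .down) := by
  refine (mk_eq_X_mul_mk (stateSum_zero p q r f _) (stateSum_flat_succ p q r f)).trans
    (congrArg (X * ·) ?_)
  ext n
  simp [stateSeries]

theorem stateSeries_down :
    stateSeries p q r f .down = C (f 0) * X * weightSeries p q r (fun k => (k : ℚ)) := by
  rw [mul_comm (C (f 0)), mul_assoc, ← weightSeries_const_mul]
  exact mk_eq_X_mul_mk (stateSum_zero p q r f _) fun n => by
    rw [stateSum_down_succ, weightSum_const_mul]

theorem weightSeries_functional_equation :
    (1 - C r * X) * weightSeries p q r f =
      C (f 0) * X * (1 + C (1 - r) * X) +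
        X * (1 + C (p - r) * X) * weightSeries p q r (fun k => f (k + 1)) +
          C (f 0) * X * (1 + C (q - r) * X) * weightSeries p q r (fun k => (k : ℚ)) := by
  have hflat := stateSeries_flat p q r f
  rw [weightSeries_eq_sum_stateSeries, stateSeries_initial, stateSeries_up,
    stateSeries_down] at *
  simp only [map_sub, map_one]
  linear_combination hflat

end Series

end FlatCatalan

open FlatCatalan PowerSeries in
/-- The generating function for flattened Catalan words jointly by length,
`#122`, `#211`, `#111` and `trun − 1` satisfies
`(1 − (r+y)x − (p−r)x²y)·((1 − (1+r)x − (p−r)x²)² − x²(1+(p−r)x)(1+(q−r)x))·B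
  = x(1 + (1−r)x)(1 − (1+r)x − (p−r)x²)²`. -/
theorem genfun_122_211_111 (p q r y : ℚ) (B : PowerSeries ℚ)
    (hB : ∀ n : ℕ, PowerSeries.coeff n B =
      if n = 0 then 0 else
        ∑ᶠ w ∈ FlatCat n,
          p ^ numOcc [1, 2, 2] w * q ^ numOcc [2, 1, 1] w *
            r ^ numOcc [1, 1, 1] w * y ^ (trun w - 1)) :
    (1 - PowerSeries.C (r + y) * PowerSeries.X
        - PowerSeries.C ((p - r) * y) * PowerSeries.X ^ 2) *
      ((1 - PowerSeries.C (1 + r) * PowerSeries.X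
          - PowerSeries.C (p - r) * PowerSeries.X ^ 2) ^ 2
        - PowerSeries.X ^ 2 * (1 + PowerSeries.C (p - r) * PowerSeries.X) *
            (1 + PowerSeries.C (q - r) * PowerSeries.X)) * B =
    PowerSeries.X * (1 + PowerSeries.C (1 - r) * PowerSeries.X) *
      (1 - PowerSeries.C (1 + r) * PowerSeries.X
        - PowerSeries.C (p - r) * PowerSeries.X ^ 2) ^ 2 := by
  obtain rfl : B = weightSeries p q r (y ^ ·) := by
    ext n
    rw [hB, weightSeries, coeff_mk]
    split_ifs with hn
    · rw [hn, weightSum_zero]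
    · rw [finsum_mem_eq_finite_toFinset_sum _ (flatCat_finite n)]
      rfl
  have hW := weightSeries_functional_equation p q r (fun _ => 1)
  have hA := weightSeries_functional_equation p q r (fun k => (k : ℚ))
  have hY := weightSeries_functional_equation p q r (y ^ ·)
  simp only [Nat.cast_add, Nat.cast_one, Nat.cast_zero, weightSeries_add, pow_zero, pow_succ',
    weightSeries_const_mul, map_zero, map_one, zero_mul, add_zero, one_mul, map_add, map_sub,
    map_mul] at hW hA hY ⊢
  linear_combination
    ((1 - (1 + C r) * X - (C p - C r) * X ^ 2) ^ 2 -
        X ^ 2 * (1 + (C p - C r) * X) * (1 + (C q - C r) * X)) * hY +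
      X ^ 2 * (1 + (C p - C r) * X) * (1 + (C q - C r) * X) * hW +
      X * (1 + (C q - C r) * X) * (1 - (1 + C r) * X - (C p - C r) * X ^ 2) * hA
end
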